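/- arXiv:2510.12867 — 3 statements merged into one kernel-verified Lean document; each statement's English description precedes it below -/
import Mathlib

section
/- Let p > 2 be prime, let B = (L,Q) be a quadratic factor on 𝔽_p^n of complexity (ℓ,q), and let d = (a₁,a₂,a₃,b₁₂,b₁₃,b₂₃) ∈ 𝔽_p^{ℓ+q} × 𝔽_p^{ℓ+q} × 𝔽_p^{ℓ+q} × 𝔽_p^q × 𝔽_p^q × 𝔽_p^q. Then for any functions (f_ε)_{ε∈{0,1}³} : 𝔽_p^n → ℂ, the local Gowers–Cauchy–Schwarz inequality holds: |⟨(f_ε)_{ε∈{0,1}³}⟩_{U³(d)}| ≤ ∏_{ε∈{0,1}³} ‖f_ε‖_{U³(d)}. -/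
open scoped BigOperators Matrix

namespace TW

noncomputable section

/-- Normalized average of a complex-valued function over a finite set. -/
def expC {α : Type*} (s : Finset α) (f : α → ℂ) : ℂ := (s.card : ℂ)⁻¹ * ∑ x ∈ s, f x

/-- Normalized average of a real-valued function over a finite set. -/
def expR {α : Type*} (s : Finset α) (f : α → ℝ) : ℝ := (s.card : ℝ)⁻¹ * ∑ x ∈ s, f x

/-- `k`-fold complex conjugation. -/
def cConj (k : ℕ) (z : ℂ) : ℂ := if k % 2 = 0 then z else (starRingEnd ℂ) z

/-- Select one of two elements according to a bit: `bsel false u v = u`, `bsel true u v = v`. -/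
def bsel {α : Type*} (b : Bool) (u v : α) : α := if b then v else u

/-- The number of ones in a boolean vector. -/
def wt {k : ℕ} (ω : Fin k → Bool) : ℕ := (Finset.univ.filter fun i => ω i = true).card

/-- The indicator function of a finite set, with values in `ℂ`. -/
def indC {α : Type*} [DecidableEq α] (A : Finset α) (x : α) : ℂ := if x ∈ A then 1 else 0

/-- The density `|A ∩ B| / |B|` of `A` on `B`. -/
def density {α : Type*} [DecidableEq α] (A B : Finset α) : ℝ :=
  ((A ∩ B).card : ℝ) / (B.card : ℝ)

/-- A growth function: an increasing positive function on `ℝ⁺`. -/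
def GrowthFunction (σ : ℝ → ℝ) : Prop :=
  (∀ x : ℝ, 0 < x → 0 < σ x) ∧ ∀ x y : ℝ, 0 < x → x ≤ y → σ x ≤ σ y

/-- A polynomial growth function: a growth function bounded above by a polynomial on `ℝ⁺`. -/
def PolyGrowthFunction (σ : ℝ → ℝ) : Prop :=
  GrowthFunction σ ∧ ∃ P : Polynomial ℝ, ∀ x : ℝ, 0 < x → σ x ≤ P.eval x

/-- `A ⊆ G` has the `m`-independence property (i.e. `VC`-dimension at least `m`). -/
def HasIP {G : Type*} [AddCommGroup G] (A : Set G) (m : ℕ) : Prop :=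
  ∃ (a : Fin m → G) (b : Finset (Fin m) → G),
    ∀ (i : Fin m) (S : Finset (Fin m)), a i + b S ∈ A ↔ i ∈ S

/-- `A ⊆ G` has the `m`-`IP₂` property (i.e. `VC₂`-dimension at least `m`). -/
def HasIP2 {G : Type*} [AddCommGroup G] (A : Set G) (m : ℕ) : Prop :=
  ∃ (a b : Fin m → G) (c : Finset (Fin m × Fin m) → G),
    ∀ (i j : Fin m) (S : Finset (Fin m × Fin m)), a i + b j + c S ∈ A ↔ (i, j) ∈ S

variable {p : ℕ}

/-- The atom of the linear factor `L` labelled by `a`. -/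
def linAtom [NeZero p] {n ℓ : ℕ} (L : Fin ℓ → (Fin n → ZMod p)) (a : Fin ℓ → ZMod p) :
    Finset (Fin n → ZMod p) :=
  Finset.univ.filter fun x => ∀ i, x ⬝ᵥ L i = a i

/-- A quadratic factor on `𝔽_p^n` of complexity `(ℓ, q)`: `ℓ` linearly independent vectors
together with `q` symmetric `n × n` matrices over `𝔽_p`. -/
structure QuadFactor (p n ℓ q : ℕ) where
  L : Fin ℓ → (Fin n → ZMod p)
  M : Fin q → Matrix (Fin n) (Fin n) (ZMod p)
  indep : LinearIndependent (ZMod p) L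
  symm : ∀ j, (M j).IsSymm

/-- The atom of a quadratic factor labelled by `a = (linear label, quadratic label)`. -/
def qAtom [NeZero p] {n ℓ q : ℕ} (F : QuadFactor p n ℓ q)
    (a : (Fin ℓ → ZMod p) × (Fin q → ZMod p)) : Finset (Fin n → ZMod p) :=
  Finset.univ.filter fun x =>
    (∀ i, x ⬝ᵥ F.L i = a.1 i) ∧ ∀ j, x ⬝ᵥ (F.M j *ᵥ x) = a.2 j

/-- The set of (nonempty) atoms of a quadratic factor. -/
def atoms [NeZero p] {n ℓ q : ℕ} (F : QuadFactor p n ℓ q) :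
    Finset (Finset (Fin n → ZMod p)) :=
  ((Finset.univ : Finset ((Fin ℓ → ZMod p) × (Fin q → ZMod p))).image fun a => qAtom F a).filter
    fun B => B.Nonempty

/-- The quadratic factor `F` has rank at least `r`: every nontrivial linear combination of its
matrices has rank at least `r`. -/
def rankGe {n ℓ q : ℕ} (F : QuadFactor p n ℓ q) (r : ℝ) : Prop :=
  ∀ lam : Fin q → ZMod p, lam ≠ 0 → r ≤ ((∑ j, lam j • F.M j).rank : ℝ)

/-- The bilinear level set `β(b)`. -/
def bilinSet [NeZero p] {n q : ℕ} (M : Fin q → Matrix (Fin n) (Fin n) (ZMod p))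
    (b : Fin q → ZMod p) : Finset ((Fin n → ZMod p) × (Fin n → ZMod p)) :=
  Finset.univ.filter fun xy => ∀ j, xy.1 ⬝ᵥ (M j *ᵥ xy.2) = b j

/-- The characteristic measure `μ_{β(b)}` of a bilinear level set. -/
def bmu [NeZero p] {n q : ℕ} (M : Fin q → Matrix (Fin n) (Fin n) (ZMod p))
    (b : Fin q → ZMod p) (x y : Fin n → ZMod p) : ℝ :=
  if (x, y) ∈ bilinSet M b then ((p : ℝ) ^ (2 * n)) / ((bilinSet M b).card : ℝ) else 0

/-- The label `Σ(d)` of the atom on which the local `U³` inner product evaluates its inputs. -/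
def sigmaLabel {p : ℕ} {ℓ q : ℕ} (a₁ a₂ a₃ : (Fin ℓ → ZMod p) × (Fin q → ZMod p))
    (b₁₂ b₁₃ b₂₃ : Fin q → ZMod p) : (Fin ℓ → ZMod p) × (Fin q → ZMod p) :=
  (a₁.1 + a₂.1 + a₃.1, a₁.2 + a₂.2 + a₃.2 + 2 • (b₁₂ + b₁₃ + b₂₃))

/-- The local `U²` inner product relative to the atoms `L(a₁)`, `L(a₂)`. -/
def localU2Inner [NeZero p] {n ℓ : ℕ} (L : Fin ℓ → (Fin n → ZMod p)) (a₁ a₂ : Fin ℓ → ZMod p)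
    (f : (Fin 2 → Bool) → (Fin n → ZMod p) → ℂ) : ℂ :=
  expC (linAtom L a₁) fun x₀ => expC (linAtom L a₁) fun x₁ =>
  expC (linAtom L a₂) fun y₀ => expC (linAtom L a₂) fun y₁ =>
  ∏ ε : Fin 2 → Bool, cConj (wt ε) (f ε (bsel (ε 0) x₀ x₁ + bsel (ε 1) y₀ y₁))

/-- The local `U²` semi-norm. -/
def localU2Norm [NeZero p] {n ℓ : ℕ} (L : Fin ℓ → (Fin n → ZMod p)) (a₁ a₂ : Fin ℓ → ZMod p)
    (f : (Fin n → ZMod p) → ℂ) : ℝ :=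
  (localU2Inner L a₁ a₂ fun _ => f).re ^ ((1 : ℝ) / 4)

/-- The (global) `U²` inner product on `𝔽_p^n`. -/
def U2Inner [NeZero p] {n : ℕ} (f : (Fin 2 → Bool) → (Fin n → ZMod p) → ℂ) : ℂ :=
  expC (Finset.univ : Finset (Fin n → ZMod p)) fun x₀ =>
  expC (Finset.univ : Finset (Fin n → ZMod p)) fun x₁ =>
  expC (Finset.univ : Finset (Fin n → ZMod p)) fun y₀ =>
  expC (Finset.univ : Finset (Fin n → ZMod p)) fun y₁ =>
  ∏ ε : Fin 2 → Bool, cConj (wt ε) (f ε (bsel (ε 0) x₀ x₁ + bsel (ε 1) y₀ y₁))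

/-- The Gowers `U²` norm on `𝔽_p^n`. -/
def U2Norm [NeZero p] {n : ℕ} (f : (Fin n → ZMod p) → ℂ) : ℝ :=
  (U2Inner fun _ => f).re ^ ((1 : ℝ) / 4)

/-- The (global) `U³` inner product on `𝔽_p^n`. -/
def U3Inner [NeZero p] {n : ℕ} (f : (Fin 3 → Bool) → (Fin n → ZMod p) → ℂ) : ℂ :=
  expC (Finset.univ : Finset (Fin n → ZMod p)) fun x₀ =>
  expC (Finset.univ : Finset (Fin n → ZMod p)) fun x₁ =>
  expC (Finset.univ : Finset (Fin n → ZMod p)) fun y₀ =>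
  expC (Finset.univ : Finset (Fin n → ZMod p)) fun y₁ =>
  expC (Finset.univ : Finset (Fin n → ZMod p)) fun z₀ =>
  expC (Finset.univ : Finset (Fin n → ZMod p)) fun z₁ =>
  ∏ ω : Fin 3 → Bool,
    cConj (wt ω) (f ω (bsel (ω 0) x₀ x₁ + bsel (ω 1) y₀ y₁ + bsel (ω 2) z₀ z₁))

/-- The Gowers `U³` norm on `𝔽_p^n`. -/
def U3Norm [NeZero p] {n : ℕ} (f : (Fin n → ZMod p) → ℂ) : ℝ :=
  (U3Inner fun _ => f).re ^ ((1 : ℝ) / 8)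

/-- The local `U³` inner product relative to a quadratic factor, with label tuple
`d = (a₁, a₂, a₃, b₁₂, b₁₃, b₂₃)`. -/
def localU3Inner [NeZero p] {n ℓ q : ℕ} (F : QuadFactor p n ℓ q)
    (a₁ a₂ a₃ : (Fin ℓ → ZMod p) × (Fin q → ZMod p)) (b₁₂ b₁₃ b₂₃ : Fin q → ZMod p)
    (f : (Fin 3 → Bool) → (Fin n → ZMod p) → ℂ) : ℂ :=
  expC (qAtom F a₁) fun x₀ => expC (qAtom F a₁) fun x₁ =>
  expC (qAtom F a₂) fun y₀ => expC (qAtom F a₂) fun y₁ =>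
  expC (qAtom F a₃) fun z₀ => expC (qAtom F a₃) fun z₁ =>
  (∏ ij : Bool × Bool, (bmu F.M b₁₂ (bsel ij.1 x₀ x₁) (bsel ij.2 y₀ y₁) : ℂ)) *
  (∏ ik : Bool × Bool, (bmu F.M b₁₃ (bsel ik.1 x₀ x₁) (bsel ik.2 z₀ z₁) : ℂ)) *
  (∏ jk : Bool × Bool, (bmu F.M b₂₃ (bsel jk.1 y₀ y₁) (bsel jk.2 z₀ z₁) : ℂ)) *
  ∏ ω : Fin 3 → Bool,
    cConj (wt ω) (f ω (bsel (ω 0) x₀ x₁ + bsel (ω 1) y₀ y₁ + bsel (ω 2) z₀ z₁))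

/-- The local `U³` semi-norm. -/
def localU3Norm [NeZero p] {n ℓ q : ℕ} (F : QuadFactor p n ℓ q)
    (a₁ a₂ a₃ : (Fin ℓ → ZMod p) × (Fin q → ZMod p)) (b₁₂ b₁₃ b₂₃ : Fin q → ZMod p)
    (f : (Fin n → ZMod p) → ℂ) : ℝ :=
  (localU3Inner F a₁ a₂ a₃ b₁₂ b₁₃ b₂₃ fun _ => f).re ^ ((1 : ℝ) / 8)

/-- The `m`-`IP` operator. -/
def IPop [NeZero p] {n : ℕ} (m : ℕ) (f : Fin m → Finset (Fin m) → (Fin n → ZMod p) → ℂ) : ℂ :=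
  expC (Finset.univ : Finset (Fin m → Fin n → ZMod p)) fun x =>
  expC (Finset.univ : Finset (Finset (Fin m) → Fin n → ZMod p)) fun y =>
  ∏ i, ∏ S, f i S (x i + y S)

/-- The `m`-`IP₂` operator. -/
def IP2op [NeZero p] {n : ℕ} (m : ℕ)
    (f : Fin m → Fin m → Finset (Fin m × Fin m) → (Fin n → ZMod p) → ℂ) : ℂ :=
  expC (Finset.univ : Finset (Fin m → Fin n → ZMod p)) fun x =>
  expC (Finset.univ : Finset (Fin m → Fin n → ZMod p)) fun y =>
  expC (Finset.univ : Finset (Finset (Fin m × Fin m) → Fin n → ZMod p)) fun z =>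
  ∏ i, ∏ j, ∏ S, f i j S (x i + y j + z S)

/-- The local `m`-`IP` operator relative to the atoms `L(a₁)`, `L(a₂)`. -/
def localIPop [NeZero p] {n ℓ : ℕ} (m : ℕ) (L : Fin ℓ → (Fin n → ZMod p))
    (a₁ a₂ : Fin ℓ → ZMod p) (f : Fin m → Finset (Fin m) → (Fin n → ZMod p) → ℂ) : ℂ :=
  expC (Fintype.piFinset fun _ : Fin m => linAtom L a₁) fun x =>
  expC (Fintype.piFinset fun _ : Finset (Fin m) => linAtom L a₂) fun y =>
  ∏ i, ∏ S, f i S (x i + y S)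

/-- The local `m`-`IP₂` operator relative to a quadratic factor with label tuple `d`. -/
def localIP2op [NeZero p] {n ℓ q : ℕ} (m : ℕ) (F : QuadFactor p n ℓ q)
    (a₁ a₂ a₃ : (Fin ℓ → ZMod p) × (Fin q → ZMod p)) (b₁₂ b₁₃ b₂₃ : Fin q → ZMod p)
    (f : Fin m → Fin m → Finset (Fin m × Fin m) → (Fin n → ZMod p) → ℂ) : ℂ :=
  expC (Fintype.piFinset fun _ : Fin m => qAtom F a₁) fun x =>
  expC (Fintype.piFinset fun _ : Fin m => qAtom F a₂) fun y =>
  expC (Fintype.piFinset fun _ : Finset (Fin m × Fin m) => qAtom F a₃) fun z =>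
    (∏ i, ∏ j, (bmu F.M b₁₂ (x i) (y j) : ℂ)) *
    (∏ i, ∏ S, (bmu F.M b₁₃ (x i) (z S) : ℂ)) *
    (∏ j, ∏ S, (bmu F.M b₂₃ (y j) (z S) : ℂ)) *
    ∏ i, ∏ j, ∏ S, f i j S (x i + y j + z S)

/-- The ternary multi-local `F`-operator, for a `3`-partite `3`-uniform hypergraph with parts
`U`, `V`, `W` and label tuples `e_{uvw} = (a u, b v, c w, d₁₂ u v, d₁₃ u w, d₂₃ v w)`. -/
def TFop [NeZero p] {n ℓ q m : ℕ} (F : QuadFactor p n ℓ q) (U V W : Finset (Fin m))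
    (a b c : Fin m → (Fin ℓ → ZMod p) × (Fin q → ZMod p))
    (d₁₂ d₁₃ d₂₃ : Fin m → Fin m → (Fin q → ZMod p))
    (g : Fin m → Fin m → Fin m → (Fin n → ZMod p) → ℂ) : ℂ :=
  expC (Fintype.piFinset fun u : {u // u ∈ U} => qAtom F (a u.1)) fun x =>
  expC (Fintype.piFinset fun v : {v // v ∈ V} => qAtom F (b v.1)) fun y =>
  expC (Fintype.piFinset fun w : {w // w ∈ W} => qAtom F (c w.1)) fun z =>
    (∏ u, ∏ v, (bmu F.M (d₁₂ u.1 v.1) (x u) (y v) : ℂ)) *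
    (∏ u, ∏ w, (bmu F.M (d₁₃ u.1 w.1) (x u) (z w) : ℂ)) *
    (∏ v, ∏ w, (bmu F.M (d₂₃ v.1 w.1) (y v) (z w) : ℂ)) *
    ∏ u, ∏ v, ∏ w, g u.1 v.1 w.1 (x u + y v + z w)

end

noncomputable section
namespace GCS

section Lemmas
variable {β γ : Type*}

lemma expC_congr (s : Finset β) {f g : β → ℂ} (h : ∀ x, f x = g x) : expC s f = expC s g :=
  congrArg _ (funext h)

lemma expC_comm (s : Finset β) (t : Finset γ) (F : β → γ → ℂ) :
    (expC s fun a => expC t fun b => F a b) = expC t fun b => expC s fun a => F a b := by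
  simp only [expC, Finset.mul_sum]
  rw [Finset.sum_comm]
  exact Finset.sum_congr rfl fun b _ => Finset.sum_congr rfl fun a _ => by ring

lemma expC_conj (s : Finset β) (f : β → ℂ) :
    (starRingEnd ℂ) (expC s f) = expC s fun a => (starRingEnd ℂ) (f a) := by
  simp [expC, map_sum]

lemma mul_expC (c : ℂ) (t : Finset γ) (g : γ → ℂ) :
    c * expC t g = expC t fun b => c * g b := by
  unfold expC; rw [Finset.mul_sum]; rw [← Finset.mul_sum, ← Finset.mul_sum]; ring

lemma expC_mul (z : ℂ) (t : Finset γ) (g : γ → ℂ) :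
    expC t g * z = expC t fun b => g b * z := by
  unfold expC; rw [mul_assoc, Finset.sum_mul]

lemma expC_mul_expC (s : Finset β) (t : Finset γ) (f : β → ℂ) (g : γ → ℂ) :
    expC s f * expC t g = expC s fun a => expC t fun b => f a * g b := by
  rw [expC_mul]
  exact expC_congr s fun a => mul_expC _ _ _

lemma expC_product (s : Finset β) (t : Finset γ) (F : β × γ → ℂ) :
    expC (s ×ˢ t) F = expC s fun a => expC t fun b => F (a, b) := by
  simp only [expC, Finset.card_product, Finset.sum_product, Nat.cast_mul, mul_inv,
    Finset.mul_sum]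
  exact Finset.sum_congr rfl fun a _ => Finset.sum_congr rfl fun b _ => by ring

lemma expC_sq_nonneg (B : Finset β) (ν : β → ℝ) (hν : ∀ b, 0 ≤ ν b) (P : β → ℂ) :
    0 ≤ (expC B fun b => (ν b : ℂ) * (P b * (starRingEnd ℂ) (P b))).re := by
  have : (expC B fun b => (ν b : ℂ) * (P b * (starRingEnd ℂ) (P b)))
      = (((B.card : ℝ)⁻¹ * ∑ b ∈ B, ν b * Complex.normSq (P b) : ℝ) : ℂ) := by
    unfold expC; push_cast [Complex.mul_conj]; ring
  rw [this, Complex.ofReal_re]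
  exact mul_nonneg (by positivity)
    (Finset.sum_nonneg fun b _ => mul_nonneg (hν b) (Complex.normSq_nonneg _))

lemma expC_cs (B : Finset β) (ν : β → ℝ) (hν : ∀ b, 0 ≤ ν b) (P Q : β → ℂ) :
    ‖expC B fun b => (ν b : ℂ) * (P b * (starRingEnd ℂ) (Q b))‖ ^ 2 ≤
      (expC B fun b => (ν b : ℂ) * (P b * (starRingEnd ℂ) (P b))).re *
      (expC B fun b => (ν b : ℂ) * (Q b * (starRingEnd ℂ) (Q b))).re := by
  have hre : ∀ R : β → ℂ, (expC B fun b => (ν b : ℂ) * (R b * (starRingEnd ℂ) (R b))).re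
      = (B.card : ℝ)⁻¹ * ∑ b ∈ B, ν b * ‖R b‖ ^ 2 := by
    intro R
    have : (expC B fun b => (ν b : ℂ) * (R b * (starRingEnd ℂ) (R b)))
        = (((B.card : ℝ)⁻¹ * ∑ b ∈ B, ν b * ‖R b‖ ^ 2 : ℝ) : ℂ) := by
      unfold expC
      push_cast [Complex.mul_conj]
      rw [Finset.mul_sum, Finset.mul_sum]
      refine Finset.sum_congr rfl fun b _ => ?_
      rw [show Complex.normSq (R b) = ‖R b‖^2 by rw [Complex.sq_norm]]
      push_cast; ring
    rw [this, Complex.ofReal_re]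
  rw [hre, hre]
  have h1 : ‖expC B fun b => (ν b : ℂ) * (P b * (starRingEnd ℂ) (Q b))‖ ≤
      (B.card : ℝ)⁻¹ * ∑ b ∈ B, ν b * (‖P b‖ * ‖Q b‖) := by
    unfold expC
    rw [norm_mul]
    refine mul_le_mul ?_ (norm_sum_le_of_le B ?_) (norm_nonneg _) (by positivity)
    · simp
    · intro b _
      rw [norm_mul, norm_mul]
      simp [abs_of_nonneg (hν b), mul_assoc]
  have h2 : (∑ b ∈ B, ν b * (‖P b‖ * ‖Q b‖)) ^ 2 ≤
      (∑ b ∈ B, ν b * ‖P b‖ ^ 2) * ∑ b ∈ B, ν b * ‖Q b‖ ^ 2 := by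
    have hcs := Finset.sum_mul_sq_le_sq_mul_sq B (fun b => Real.sqrt (ν b) * ‖P b‖)
      (fun b => Real.sqrt (ν b) * ‖Q b‖)
    calc (∑ b ∈ B, ν b * (‖P b‖ * ‖Q b‖)) ^ 2
        = (∑ b ∈ B, (Real.sqrt (ν b) * ‖P b‖) * (Real.sqrt (ν b) * ‖Q b‖)) ^ 2 := by
          congr 1
          exact Finset.sum_congr rfl fun b _ => by
            rw [show Real.sqrt (ν b) * ‖P b‖ * (Real.sqrt (ν b) * ‖Q b‖)
              = (Real.sqrt (ν b) * Real.sqrt (ν b)) * (‖P b‖ * ‖Q b‖) by ring,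
              Real.mul_self_sqrt (hν b)]
      _ ≤ (∑ b ∈ B, (Real.sqrt (ν b) * ‖P b‖) ^ 2) * ∑ b ∈ B, (Real.sqrt (ν b) * ‖Q b‖) ^ 2 := hcs
      _ = (∑ b ∈ B, ν b * ‖P b‖ ^ 2) * ∑ b ∈ B, ν b * ‖Q b‖ ^ 2 := by
          congr 1 <;> exact Finset.sum_congr rfl fun b _ => by
            rw [mul_pow, Real.sq_sqrt (hν b)]
  calc ‖expC B fun b => (ν b : ℂ) * (P b * (starRingEnd ℂ) (Q b))‖ ^ 2
      ≤ ((B.card : ℝ)⁻¹ * ∑ b ∈ B, ν b * (‖P b‖ * ‖Q b‖)) ^ 2 := by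
        apply pow_le_pow_left₀ (norm_nonneg _) h1
    _ = ((B.card : ℝ)⁻¹)^2 * (∑ b ∈ B, ν b * (‖P b‖ * ‖Q b‖)) ^ 2 := by ring
    _ ≤ ((B.card : ℝ)⁻¹)^2 * ((∑ b ∈ B, ν b * ‖P b‖ ^ 2) * ∑ b ∈ B, ν b * ‖Q b‖ ^ 2) := by
        apply mul_le_mul_of_nonneg_left h2 (by positivity)
    _ = ((B.card : ℝ)⁻¹ * ∑ b ∈ B, ν b * ‖P b‖ ^ 2) *
        ((B.card : ℝ)⁻¹ * ∑ b ∈ B, ν b * ‖Q b‖ ^ 2) := by ring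

lemma expC_push4 {α₀ β₁ β₂ β₃ β₄ : Type*} (S : Finset α₀) (A : Finset β₁) (B : Finset β₂)
    (C : Finset β₃) (D : Finset β₄) (F : α₀ → β₁ → β₂ → β₃ → β₄ → ℂ) :
    (expC S fun x => expC A fun a => expC B fun b => expC C fun c => expC D fun d => F x a b c d)
    = expC A fun a => expC B fun b => expC C fun c => expC D fun d =>
        expC S fun x => F x a b c d := by
  rw [expC_comm S A]
  refine expC_congr A fun a => ?_
  rw [expC_comm S B]
  refine expC_congr B fun b => ?_
  rw [expC_comm S C]
  refine expC_congr C fun c => ?_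
  exact expC_comm S D _

lemma expC_push2_4 {α₀ β₁ β₂ β₃ β₄ : Type*} (S : Finset α₀) (A : Finset β₁) (B : Finset β₂)
    (C : Finset β₃) (D : Finset β₄) (F : α₀ → α₀ → β₁ → β₂ → β₃ → β₄ → ℂ) :
    (expC S fun x₀ => expC S fun x₁ => expC A fun a => expC B fun b => expC C fun c =>
      expC D fun d => F x₀ x₁ a b c d)
    = expC A fun a => expC B fun b => expC C fun c => expC D fun d =>
        expC S fun x₀ => expC S fun x₁ => F x₀ x₁ a b c d := by
  rw [expC_congr S fun x₀ => expC_push4 S A B C D (F x₀)]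
  exact expC_push4 S A B C D fun x₀ a b c d => expC S fun x₁ => F x₀ x₁ a b c d

lemma expC_push2 {α₀ β₃ β₄ : Type*} (S : Finset α₀) (C : Finset β₃) (D : Finset β₄)
    (F : α₀ → β₃ → β₄ → ℂ) :
    (expC S fun x => expC C fun c => expC D fun d => F x c d)
    = expC C fun c => expC D fun d => expC S fun x => F x c d := by
  rw [expC_comm S C]
  exact expC_congr C fun c => expC_comm S D _

lemma expC_push2_2 {α₀ β₃ β₄ : Type*} (S : Finset α₀) (C : Finset β₃) (D : Finset β₄)
    (F : α₀ → α₀ → β₃ → β₄ → ℂ) :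
    (expC S fun y₀ => expC S fun y₁ => expC C fun c => expC D fun d => F y₀ y₁ c d)
    = expC C fun c => expC D fun d => expC S fun y₀ => expC S fun y₁ => F y₀ y₁ c d := by
  rw [expC_congr S fun y₀ => expC_push2 S C D (F y₀)]
  exact expC_push2 S C D fun y₀ c d => expC S fun y₁ => F y₀ y₁ c d

lemma expC_product4 {β : Type*} (s t u v : Finset β) (F : β × β × β × β → ℂ) :
    expC (s ×ˢ t ×ˢ u ×ˢ v) F =
      expC s fun a => expC t fun b => expC u fun c => expC v fun d => F (a, b, c, d) := by
  rw [expC_product]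
  exact expC_congr s fun a => by
    rw [expC_product]
    exact expC_congr t fun b => by rw [expC_product]

end Lemmas

section Enum
variable {M : Type*} [CommMonoid M]

def e3 : (Fin 3 → Bool) ≃ Bool × Bool × Bool where
  toFun ω := (ω 0, ω 1, ω 2)
  invFun t := ![t.1, t.2.1, t.2.2]
  left_inv ω := by funext i; fin_cases i <;> rfl
  right_inv t := rfl

def e2 : (Fin 2 → Bool) ≃ Bool × Bool where
  toFun ω := (ω 0, ω 1)
  invFun t := ![t.1, t.2]
  left_inv ω := by funext i; fin_cases i <;> rfl
  right_inv t := rfl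

lemma prod_bool (g : Bool → M) : ∏ b : Bool, g b = g false * g true := by
  rw [Fintype.prod_bool]; exact mul_comm _ _

lemma prod_boolpair (g : Bool × Bool → M) :
    ∏ ij : Bool × Bool, g ij =
      g (false, false) * g (false, true) * (g (true, false) * g (true, true)) := by
  rw [Fintype.prod_prod_type, prod_bool, prod_bool, prod_bool]

lemma prod_pi2 (g : (Fin 2 → Bool) → M) :
    ∏ ε : Fin 2 → Bool, g ε =
      g ![false, false] * g ![false, true] * (g ![true, false] * g ![true, true]) := by
  rw [← Equiv.prod_comp e2.symm g, Fintype.prod_prod_type, prod_bool, prod_bool, prod_bool]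
  rfl

lemma prod_pi3 (g : (Fin 3 → Bool) → M) :
    ∏ ω : Fin 3 → Bool, g ω =
      g ![false, false, false] * g ![false, false, true] *
        (g ![false, true, false] * g ![false, true, true]) *
      (g ![true, false, false] * g ![true, false, true] *
        (g ![true, true, false] * g ![true, true, true])) := by
  rw [← Equiv.prod_comp e3.symm g, Fintype.prod_prod_type, prod_bool]
  congr 1 <;> · rw [Fintype.prod_prod_type, prod_bool, prod_bool, prod_bool]; rfl

end Enum

lemma cConj_zero (z : ℂ) : cConj 0 z = z := rfl
lemma cConj_one (z : ℂ) : cConj 1 z = (starRingEnd ℂ) z := rfl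
lemma cConj_two (z : ℂ) : cConj 2 z = z := rfl
lemma cConj_three (z : ℂ) : cConj 3 z = (starRingEnd ℂ) z := rfl
lemma bsel_false {α : Type*} (u v : α) : bsel false u v = u := rfl
lemma bsel_true {α : Type*} (u v : α) : bsel true u v = v := rfl

lemma wt2ff : wt ![false, false] = 0 := by decide
lemma wt2ft : wt ![false, true] = 1 := by decide
lemma wt2tf : wt ![true, false] = 1 := by decide
lemma wt2tt : wt ![true, true] = 2 := by decide
lemma wt3_0 : wt ![false, false, false] = 0 := by decide
lemma wt3_1 : wt ![false, false, true] = 1 := by decide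
lemma wt3_2 : wt ![false, true, false] = 1 := by decide
lemma wt3_3 : wt ![false, true, true] = 2 := by decide
lemma wt3_4 : wt ![true, false, false] = 1 := by decide
lemma wt3_5 : wt ![true, false, true] = 2 := by decide
lemma wt3_6 : wt ![true, true, false] = 2 := by decide
lemma wt3_7 : wt ![true, true, true] = 3 := by decide

section GJ
variable {α : Type*} [AddCommGroup α]

def gJ (A₁ A₂ A₃ : Finset α) (w₁₂ w₁₃ w₂₃ : α → α → ℝ)
    (f : (Fin 3 → Bool) → α → ℂ) : ℂ :=
  expC A₁ fun x₀ => expC A₁ fun x₁ => expC A₂ fun y₀ => expC A₂ fun y₁ =>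
  expC A₃ fun z₀ => expC A₃ fun z₁ =>
  (∏ ij : Bool × Bool, ((w₁₂ (bsel ij.1 x₀ x₁) (bsel ij.2 y₀ y₁) : ℝ) : ℂ)) *
  (∏ ik : Bool × Bool, ((w₁₃ (bsel ik.1 x₀ x₁) (bsel ik.2 z₀ z₁) : ℝ) : ℂ)) *
  (∏ jk : Bool × Bool, ((w₂₃ (bsel jk.1 y₀ y₁) (bsel jk.2 z₀ z₁) : ℝ) : ℂ)) *
  ∏ ω : Fin 3 → Bool,
    cConj (wt ω) (f ω (bsel (ω 0) x₀ x₁ + bsel (ω 1) y₀ y₁ + bsel (ω 2) z₀ z₁))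

def T3 (i : Fin 3) (d : Bool) (f : (Fin 3 → Bool) → α → ℂ) : (Fin 3 → Bool) → α → ℂ :=
  fun ω => f (Function.update ω i d)

def g0 (d : Bool) (f : (Fin 3 → Bool) → α → ℂ) : (Fin 2 → Bool) → α → ℂ :=
  fun ε => f ![d, ε 0, ε 1]
def g1 (d : Bool) (f : (Fin 3 → Bool) → α → ℂ) : (Fin 2 → Bool) → α → ℂ :=
  fun ε => f ![ε 0, d, ε 1]
def g2 (d : Bool) (f : (Fin 3 → Bool) → α → ℂ) : (Fin 2 → Bool) → α → ℂ :=
  fun ε => f ![ε 0, ε 1, d]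

lemma g0_T3 (d e : Bool) (f : (Fin 3 → Bool) → α → ℂ) : g0 d (T3 0 e f) = g0 e f := by
  funext ε
  show f (Function.update ![d, ε 0, ε 1] 0 e) = f ![e, ε 0, ε 1]
  rw [show Function.update ![d, ε 0, ε 1] (0 : Fin 3) e = ![e, ε 0, ε 1] from by
    funext j; fin_cases j <;> simp [Function.update]]

lemma g1_T3 (d e : Bool) (f : (Fin 3 → Bool) → α → ℂ) : g1 d (T3 1 e f) = g1 e f := by
  funext ε
  show f (Function.update ![ε 0, d, ε 1] 1 e) = f ![ε 0, e, ε 1]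
  rw [show Function.update ![ε 0, d, ε 1] (1 : Fin 3) e = ![ε 0, e, ε 1] from by
    funext j; fin_cases j <;> simp [Function.update]]

lemma g2_T3 (d e : Bool) (f : (Fin 3 → Bool) → α → ℂ) : g2 d (T3 2 e f) = g2 e f := by
  funext ε
  show f (Function.update ![ε 0, ε 1, d] 2 e) = f ![ε 0, ε 1, e]
  rw [show Function.update ![ε 0, ε 1, d] (2 : Fin 3) e = ![ε 0, ε 1, e] from by
    funext j; fin_cases j <;> simp [Function.update]]

lemma T3_comp (d e g : Bool) (f : (Fin 3 → Bool) → α → ℂ) :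
    T3 2 g (T3 1 e (T3 0 d f)) = fun _ => f ![d, e, g] := by
  funext ω
  show f (Function.update (Function.update (Function.update ω 2 g) 1 e) 0 d) = f ![d, e, g]
  rw [show Function.update (Function.update (Function.update ω 2 g) 1 e) 0 d = ![d, e, g] from by
    funext j; fin_cases j <;> simp [Function.update]]

def ν0 (w₂₃ : α → α → ℝ) (b : α × α × α × α) : ℝ :=
  w₂₃ b.1 b.2.2.1 * w₂₃ b.1 b.2.2.2 * (w₂₃ b.2.1 b.2.2.1 * w₂₃ b.2.1 b.2.2.2)

def P0 (A₁ : Finset α) (w₁₂ w₁₃ : α → α → ℝ) (g : (Fin 2 → Bool) → α → ℂ)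
    (b : α × α × α × α) : ℂ :=
  expC A₁ fun x =>
    ((w₁₂ x b.1 * w₁₂ x b.2.1 * (w₁₃ x b.2.2.1 * w₁₃ x b.2.2.2) : ℝ) : ℂ) *
    ∏ ε : Fin 2 → Bool,
      cConj (wt ε) (g ε (x + (bsel (ε 0) b.1 b.2.1 + bsel (ε 1) b.2.2.1 b.2.2.2)))

def ν1 (w₁₃ : α → α → ℝ) (b : α × α × α × α) : ℝ :=
  w₁₃ b.1 b.2.2.1 * w₁₃ b.1 b.2.2.2 * (w₁₃ b.2.1 b.2.2.1 * w₁₃ b.2.1 b.2.2.2)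

def P1 (A₂ : Finset α) (w₁₂ w₂₃ : α → α → ℝ) (g : (Fin 2 → Bool) → α → ℂ)
    (b : α × α × α × α) : ℂ :=
  expC A₂ fun y =>
    ((w₁₂ b.1 y * w₁₂ b.2.1 y * (w₂₃ y b.2.2.1 * w₂₃ y b.2.2.2) : ℝ) : ℂ) *
    ∏ ε : Fin 2 → Bool,
      cConj (wt ε) (g ε (y + (bsel (ε 0) b.1 b.2.1 + bsel (ε 1) b.2.2.1 b.2.2.2)))

def ν2 (w₁₂ : α → α → ℝ) (b : α × α × α × α) : ℝ :=
  w₁₂ b.1 b.2.2.1 * w₁₂ b.1 b.2.2.2 * (w₁₂ b.2.1 b.2.2.1 * w₁₂ b.2.1 b.2.2.2)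

def P2 (A₃ : Finset α) (w₁₃ w₂₃ : α → α → ℝ) (g : (Fin 2 → Bool) → α → ℂ)
    (b : α × α × α × α) : ℂ :=
  expC A₃ fun z =>
    ((w₁₃ b.1 z * w₁₃ b.2.1 z * (w₂₃ b.2.2.1 z * w₂₃ b.2.2.2 z) : ℝ) : ℂ) *
    ∏ ε : Fin 2 → Bool,
      cConj (wt ε) (g ε (z + (bsel (ε 0) b.1 b.2.1 + bsel (ε 1) b.2.2.1 b.2.2.2)))

variable (A₁ A₂ A₃ : Finset α) (w₁₂ w₁₃ w₂₃ : α → α → ℝ)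

lemma gJ_dir0 (f : (Fin 3 → Bool) → α → ℂ) :
    gJ A₁ A₂ A₃ w₁₂ w₁₃ w₂₃ f =
      expC (A₂ ×ˢ A₂ ×ˢ A₃ ×ˢ A₃) fun b =>
        ((ν0 w₂₃ b : ℝ) : ℂ) *
          (P0 A₁ w₁₂ w₁₃ (g0 false f) b *
            (starRingEnd ℂ) (P0 A₁ w₁₂ w₁₃ (g0 true f) b)) := by
  rw [gJ, expC_push2_4, expC_product4]
  refine expC_congr A₂ fun y₀ => expC_congr A₂ fun y₁ =>
    expC_congr A₃ fun z₀ => expC_congr A₃ fun z₁ => ?_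
  simp only [P0, ν0, g0]
  rw [expC_conj, expC_mul_expC, mul_expC]
  refine expC_congr A₁ fun x₀ => ?_
  rw [mul_expC]
  refine expC_congr A₁ fun x₁ => ?_
  simp only [prod_boolpair, prod_pi3, prod_pi2, map_mul, Complex.conj_ofReal,
    Matrix.cons_val_zero, Matrix.cons_val_one, Matrix.head_cons,
    Matrix.cons_val_two, Matrix.tail_cons,
    wt2ff, wt2ft, wt2tf, wt2tt, wt3_0, wt3_1, wt3_2, wt3_3, wt3_4, wt3_5, wt3_6, wt3_7,
    cConj_zero, cConj_one, cConj_two, cConj_three, bsel_false, bsel_true,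
    Complex.conj_conj, add_assoc]
  push_cast
  ring

lemma expC_swap_mid {αa αb αc : Type*} (Sa : Finset αa) (Sb : Finset αb) (Sc : Finset αc)
    (F : αa → αa → αb → αb → αc → αc → ℂ) :
    (expC Sa fun x₀ => expC Sa fun x₁ => expC Sb fun y₀ => expC Sb fun y₁ =>
      expC Sc fun z₀ => expC Sc fun z₁ => F x₀ x₁ y₀ y₁ z₀ z₁)
    = expC Sa fun x₀ => expC Sa fun x₁ => expC Sc fun z₀ => expC Sc fun z₁ =>
        expC Sb fun y₀ => expC Sb fun y₁ => F x₀ x₁ y₀ y₁ z₀ z₁ :=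
  expC_congr Sa fun x₀ => expC_congr Sa fun x₁ => expC_push2_2 Sb Sc Sc (F x₀ x₁)

lemma gJ_dir1 (f : (Fin 3 → Bool) → α → ℂ) :
    gJ A₁ A₂ A₃ w₁₂ w₁₃ w₂₃ f =
      expC (A₁ ×ˢ A₁ ×ˢ A₃ ×ˢ A₃) fun b =>
        ((ν1 w₁₃ b : ℝ) : ℂ) *
          (P1 A₂ w₁₂ w₂₃ (g1 false f) b *
            (starRingEnd ℂ) (P1 A₂ w₁₂ w₂₃ (g1 true f) b)) := by
  rw [gJ, expC_swap_mid, expC_product4]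
  refine expC_congr A₁ fun x₀ => expC_congr A₁ fun x₁ =>
    expC_congr A₃ fun z₀ => expC_congr A₃ fun z₁ => ?_
  simp only [P1, ν1, g1]
  rw [expC_conj, expC_mul_expC, mul_expC]
  refine expC_congr A₂ fun y₀ => ?_
  rw [mul_expC]
  refine expC_congr A₂ fun y₁ => ?_
  simp only [prod_boolpair, prod_pi3, prod_pi2, map_mul, Complex.conj_ofReal,
    Matrix.cons_val_zero, Matrix.cons_val_one, Matrix.head_cons,
    Matrix.cons_val_two, Matrix.tail_cons,
    wt2ff, wt2ft, wt2tf, wt2tt, wt3_0, wt3_1, wt3_2, wt3_3, wt3_4, wt3_5, wt3_6, wt3_7,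
    cConj_zero, cConj_one, cConj_two, cConj_three, bsel_false, bsel_true,
    Complex.conj_conj, add_assoc, add_comm, add_left_comm]
  push_cast
  ring

lemma gJ_dir2 (f : (Fin 3 → Bool) → α → ℂ) :
    gJ A₁ A₂ A₃ w₁₂ w₁₃ w₂₃ f =
      expC (A₁ ×ˢ A₁ ×ˢ A₂ ×ˢ A₂) fun b =>
        ((ν2 w₁₂ b : ℝ) : ℂ) *
          (P2 A₃ w₁₃ w₂₃ (g2 false f) b *
            (starRingEnd ℂ) (P2 A₃ w₁₃ w₂₃ (g2 true f) b)) := by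
  rw [gJ, expC_product4]
  refine expC_congr A₁ fun x₀ => expC_congr A₁ fun x₁ =>
    expC_congr A₂ fun y₀ => expC_congr A₂ fun y₁ => ?_
  simp only [P2, ν2, g2]
  rw [expC_conj, expC_mul_expC, mul_expC]
  refine expC_congr A₃ fun z₀ => ?_
  rw [mul_expC]
  refine expC_congr A₃ fun z₁ => ?_
  simp only [prod_boolpair, prod_pi3, prod_pi2, map_mul, Complex.conj_ofReal,
    Matrix.cons_val_zero, Matrix.cons_val_one, Matrix.head_cons,
    Matrix.cons_val_two, Matrix.tail_cons,
    wt2ff, wt2ft, wt2tf, wt2tt, wt3_0, wt3_1, wt3_2, wt3_3, wt3_4, wt3_5, wt3_6, wt3_7,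
    cConj_zero, cConj_one, cConj_two, cConj_three, bsel_false, bsel_true,
    Complex.conj_conj, add_assoc, add_comm, add_left_comm]
  push_cast
  ring

theorem gJ_bound (hw₁₂ : ∀ x y, 0 ≤ w₁₂ x y) (hw₁₃ : ∀ x y, 0 ≤ w₁₃ x y)
    (hw₂₃ : ∀ x y, 0 ≤ w₂₃ x y) (f : (Fin 3 → Bool) → α → ℂ) :
    ‖gJ A₁ A₂ A₃ w₁₂ w₁₃ w₂₃ f‖ ≤
      ∏ ω : Fin 3 → Bool, ((gJ A₁ A₂ A₃ w₁₂ w₁₃ w₂₃ fun _ => f ω).re) ^ ((1:ℝ)/8) := by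
  set J : ((Fin 3 → Bool) → α → ℂ) → ℂ := gJ A₁ A₂ A₃ w₁₂ w₁₃ w₂₃ with hJ
  have hν0 : ∀ b : α × α × α × α, 0 ≤ ν0 w₂₃ b := fun b =>
    mul_nonneg (mul_nonneg (hw₂₃ _ _) (hw₂₃ _ _)) (mul_nonneg (hw₂₃ _ _) (hw₂₃ _ _))
  have hν1 : ∀ b : α × α × α × α, 0 ≤ ν1 w₁₃ b := fun b =>
    mul_nonneg (mul_nonneg (hw₁₃ _ _) (hw₁₃ _ _)) (mul_nonneg (hw₁₃ _ _) (hw₁₃ _ _))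
  have hν2 : ∀ b : α × α × α × α, 0 ≤ ν2 w₁₂ b := fun b =>
    mul_nonneg (mul_nonneg (hw₁₂ _ _) (hw₁₂ _ _)) (mul_nonneg (hw₁₂ _ _) (hw₁₂ _ _))
  have cs0 : ∀ g, ‖J g‖ ^ 2 ≤ (J (T3 0 false g)).re * (J (T3 0 true g)).re := by
    intro g
    rw [hJ]
    rw [gJ_dir0 A₁ A₂ A₃ w₁₂ w₁₃ w₂₃ g, gJ_dir0 A₁ A₂ A₃ w₁₂ w₁₃ w₂₃ (T3 0 false g),
      gJ_dir0 A₁ A₂ A₃ w₁₂ w₁₃ w₂₃ (T3 0 true g), g0_T3, g0_T3, g0_T3, g0_T3]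
    exact expC_cs _ _ hν0 _ _
  have nn0 : ∀ g d, 0 ≤ (J (T3 0 d g)).re := by
    intro g d
    rw [hJ, gJ_dir0 A₁ A₂ A₃ w₁₂ w₁₃ w₂₃ (T3 0 d g), g0_T3, g0_T3]
    exact expC_sq_nonneg _ _ hν0 _
  have cs1 : ∀ g, ‖J g‖ ^ 2 ≤ (J (T3 1 false g)).re * (J (T3 1 true g)).re := by
    intro g
    rw [hJ]
    rw [gJ_dir1 A₁ A₂ A₃ w₁₂ w₁₃ w₂₃ g, gJ_dir1 A₁ A₂ A₃ w₁₂ w₁₃ w₂₃ (T3 1 false g),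
      gJ_dir1 A₁ A₂ A₃ w₁₂ w₁₃ w₂₃ (T3 1 true g), g1_T3, g1_T3, g1_T3, g1_T3]
    exact expC_cs _ _ hν1 _ _
  have nn1 : ∀ g d, 0 ≤ (J (T3 1 d g)).re := by
    intro g d
    rw [hJ, gJ_dir1 A₁ A₂ A₃ w₁₂ w₁₃ w₂₃ (T3 1 d g), g1_T3, g1_T3]
    exact expC_sq_nonneg _ _ hν1 _
  have cs2 : ∀ g, ‖J g‖ ^ 2 ≤ (J (T3 2 false g)).re * (J (T3 2 true g)).re := by
    intro g
    rw [hJ]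
    rw [gJ_dir2 A₁ A₂ A₃ w₁₂ w₁₃ w₂₃ g, gJ_dir2 A₁ A₂ A₃ w₁₂ w₁₃ w₂₃ (T3 2 false g),
      gJ_dir2 A₁ A₂ A₃ w₁₂ w₁₃ w₂₃ (T3 2 true g), g2_T3, g2_T3, g2_T3, g2_T3]
    exact expC_cs _ _ hν2 _ _
  have nn2 : ∀ g d, 0 ≤ (J (T3 2 d g)).re := by
    intro g d
    rw [hJ, gJ_dir2 A₁ A₂ A₃ w₁₂ w₁₃ w₂₃ (T3 2 d g), g2_T3, g2_T3]
    exact expC_sq_nonneg _ _ hν2 _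
  have re_le_norm : ∀ z : ℂ, z.re ≤ ‖z‖ := fun z => by
    exact Complex.re_le_norm z
  -- names
  have hT : ∀ d e g : Bool, J (T3 2 g (T3 1 e (T3 0 d f))) = J (fun _ => f ![d, e, g]) := by
    intro d e g; rw [T3_comp]
  have tnn : ∀ d e g : Bool, 0 ≤ (J (fun _ => f ![d, e, g])).re := by
    intro d e g; rw [← hT]; exact nn2 _ _
  have h3 : ∀ d e : Bool, (J (T3 1 e (T3 0 d f))).re ^ 2 ≤
      (J (fun _ => f ![d, e, false])).re * (J (fun _ => f ![d, e, true])).re := by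
    intro d e
    calc (J (T3 1 e (T3 0 d f))).re ^ 2 ≤ ‖J (T3 1 e (T3 0 d f))‖ ^ 2 :=
          pow_le_pow_left₀ (nn1 _ _) (re_le_norm _) 2
      _ ≤ (J (T3 2 false (T3 1 e (T3 0 d f)))).re * (J (T3 2 true (T3 1 e (T3 0 d f)))).re :=
          cs2 _
      _ = (J (fun _ => f ![d, e, false])).re * (J (fun _ => f ![d, e, true])).re := by
          rw [hT, hT]
  have h2 : ∀ d : Bool, (J (T3 0 d f)).re ^ 2 ≤
      (J (T3 1 false (T3 0 d f))).re * (J (T3 1 true (T3 0 d f))).re := by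
    intro d
    calc (J (T3 0 d f)).re ^ 2 ≤ ‖J (T3 0 d f)‖ ^ 2 :=
          pow_le_pow_left₀ (nn0 _ _) (re_le_norm _) 2
      _ ≤ _ := cs1 _
  have key : ‖J f‖ ^ 8 ≤ ∏ ω : Fin 3 → Bool, (J (fun _ => f ω)).re := by
    rw [prod_pi3 (fun ω => (J (fun _ => f ω)).re)]
    have snn : ∀ d e : Bool, 0 ≤ (J (T3 1 e (T3 0 d f))).re := fun d e => nn1 _ _
    have rnn : ∀ d : Bool, 0 ≤ (J (T3 0 d f)).re := fun d => nn0 _ _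
    have e4 : ‖J f‖ ^ 4 ≤ ((J (T3 1 false (T3 0 false f))).re * (J (T3 1 true (T3 0 false f))).re)
        * ((J (T3 1 false (T3 0 true f))).re * (J (T3 1 true (T3 0 true f))).re) := by
      calc ‖J f‖ ^ 4 = (‖J f‖ ^ 2) ^ 2 := by ring
        _ ≤ ((J (T3 0 false f)).re * (J (T3 0 true f)).re) ^ 2 :=
            pow_le_pow_left₀ (sq_nonneg _) (cs0 f) 2
        _ = (J (T3 0 false f)).re ^ 2 * (J (T3 0 true f)).re ^ 2 := by ring
        _ ≤ _ := mul_le_mul (h2 false) (h2 true) (sq_nonneg _)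
            (mul_nonneg (snn _ _) (snn _ _))
    have e8 : ‖J f‖ ^ 8 ≤
        ((J (fun _ => f ![false, false, false])).re * (J (fun _ => f ![false, false, true])).re
          * ((J (fun _ => f ![false, true, false])).re * (J (fun _ => f ![false, true, true])).re))
        * ((J (fun _ => f ![true, false, false])).re * (J (fun _ => f ![true, false, true])).re
          * ((J (fun _ => f ![true, true, false])).re * (J (fun _ => f ![true, true, true])).re)) := by
      calc ‖J f‖ ^ 8 = (‖J f‖ ^ 4) ^ 2 := by ring
        _ ≤ (((J (T3 1 false (T3 0 false f))).re * (J (T3 1 true (T3 0 false f))).re)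
            * ((J (T3 1 false (T3 0 true f))).re * (J (T3 1 true (T3 0 true f))).re)) ^ 2 :=
            pow_le_pow_left₀ (by positivity) e4 2
        _ = ((J (T3 1 false (T3 0 false f))).re ^ 2 * (J (T3 1 true (T3 0 false f))).re ^ 2)
            * ((J (T3 1 false (T3 0 true f))).re ^ 2 * (J (T3 1 true (T3 0 true f))).re ^ 2) := by
            ring
        _ ≤ _ := by
            refine mul_le_mul (mul_le_mul (h3 false false) (h3 false true) (sq_nonneg _)
              (mul_nonneg (tnn _ _ _) (tnn _ _ _)))
              (mul_le_mul (h3 true false) (h3 true true) (sq_nonneg _)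
                (mul_nonneg (tnn _ _ _) (tnn _ _ _)))
              (mul_nonneg (sq_nonneg _) (sq_nonneg _)) ?_
            exact mul_nonneg (mul_nonneg (tnn _ _ _) (tnn _ _ _))
              (mul_nonneg (tnn _ _ _) (tnn _ _ _))
    calc ‖J f‖ ^ 8 ≤ _ := e8
      _ = _ := by ring
  have hnn : ∀ ω : Fin 3 → Bool, 0 ≤ (J (fun _ => f ω)).re := by
    intro ω
    have h := tnn (ω 0) (ω 1) (ω 2)
    have : ![ω 0, ω 1, ω 2] = ω := by funext i; fin_cases i <;> rfl
    rwa [this] at h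
  have ha : (0:ℝ) ≤ ‖J f‖ := norm_nonneg _
  calc ‖J f‖ = (‖J f‖ ^ 8) ^ ((1:ℝ)/8) := by
        rw [← Real.rpow_natCast ‖J f‖ 8, ← Real.rpow_mul ha]
        norm_num
    _ ≤ (∏ ω : Fin 3 → Bool, (J (fun _ => f ω)).re) ^ ((1:ℝ)/8) :=
        Real.rpow_le_rpow (by positivity) key (by norm_num)
    _ = ∏ ω : Fin 3 → Bool, ((J (fun _ => f ω)).re) ^ ((1:ℝ)/8) :=
        (Real.finset_prod_rpow _ _ (fun ω _ => hnn ω) _).symm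


end GJ
end GCS
end

/-- Local Gowers–Cauchy–Schwarz inequality. -/
theorem statement10 (p : ℕ) [NeZero p] (hp : p.Prime) (hp2 : 2 < p) (n ℓ q : ℕ)
    (F : QuadFactor p n ℓ q)
    (a₁ a₂ a₃ : (Fin ℓ → ZMod p) × (Fin q → ZMod p)) (b₁₂ b₁₃ b₂₃ : Fin q → ZMod p)
    (f : (Fin 3 → Bool) → (Fin n → ZMod p) → ℂ) :
    ‖localU3Inner F a₁ a₂ a₃ b₁₂ b₁₃ b₂₃ f‖ ≤
      ∏ ω : Fin 3 → Bool, localU3Norm F a₁ a₂ a₃ b₁₂ b₁₃ b₂₃ (f ω) := by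
  have hb : ∀ (M : Fin q → Matrix (Fin n) (Fin n) (ZMod p)) (b : Fin q → ZMod p)
      (x y : Fin n → ZMod p), 0 ≤ bmu M b x y := by
    intro M b x y
    unfold bmu
    split
    · positivity
    · exact le_refl 0
  exact GCS.gJ_bound (qAtom F a₁) (qAtom F a₂) (qAtom F a₃) (bmu F.M b₁₂) (bmu F.M b₁₃)
    (bmu F.M b₂₃) (hb _ _) (hb _ _) (hb _ _) f

end TW
end

section
/- Let p > 2 be prime and let B = (L,∅) be a quadratic factor on 𝔽_p^n of complexity (ℓ,0) (i.e. with trivial quadratic part, q = 0). For any (a₁,a₂,a₃) ∈ 𝔽_p^ℓ × 𝔽_p^ℓ × 𝔽_p^ℓ and any f : 𝔽_p^n → ℂ, ‖f‖_{U³(d)} ≥ ‖f‖_{U²((a₁+a₂, a₃))}, where d = (a₁,a₂,a₃,0,0,0) (each label a_i regarded as an element of 𝔽_p^{ℓ+q} with q = 0) and the local U² semi-norm is taken with respect to the linear factor L. -/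
open scoped BigOperators Matrix

namespace TW

section Aux

open Finset Complex

variable {α β γ : Type*}

private lemma expC_ext {s : Finset α} {f g : α → ℂ} (h : ∀ x, f x = g x) :
    expC s f = expC s g := by rw [funext h]

private lemma expC_congr' {s : Finset α} {f g : α → ℂ} (h : ∀ x ∈ s, f x = g x) :
    expC s f = expC s g := by unfold expC; rw [Finset.sum_congr rfl h]

private lemma expC_const {s : Finset α} (hs : s.Nonempty) (c : ℂ) :
    expC s (fun _ => c) = c := by
  have h : (s.card : ℂ) ≠ 0 := Nat.cast_ne_zero.mpr (Finset.card_ne_zero.mpr hs)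
  simp only [expC, Finset.sum_const, nsmul_eq_mul, ← mul_assoc, inv_mul_cancel₀ h, one_mul]

private lemma expC_const_mul (s : Finset α) (c : ℂ) (f : α → ℂ) :
    expC s (fun x => c * f x) = c * expC s f := by
  unfold expC; rw [← Finset.mul_sum]; ring

private lemma expC_mul_const (s : Finset α) (c : ℂ) (f : α → ℂ) :
    expC s (fun x => f x * c) = expC s f * c := by
  unfold expC; rw [← Finset.sum_mul]; ring

private lemma conj_expC (s : Finset α) (f : α → ℂ) :
    (starRingEnd ℂ) (expC s f) = expC s fun x => (starRingEnd ℂ) (f x) := by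
  simp [expC, map_mul, map_sum, map_inv₀]

private lemma expC_ofReal (s : Finset α) (r : α → ℝ) :
    expC s (fun x => ((r x : ℝ) : ℂ)) = ((expR s r : ℝ) : ℂ) := by
  simp only [expC, expR]
  push_cast
  ring

private lemma expC_swap (s : Finset α) (t : Finset β) (F : α → β → ℂ) :
    (expC s fun a => expC t fun b => F a b) = expC t fun b => expC s fun a => F a b := by
  simp only [expC, Finset.mul_sum]
  rw [Finset.sum_comm]
  exact Finset.sum_congr rfl fun b _ => Finset.sum_congr rfl fun a _ => by ring

private lemma expC_mul_expC (s : Finset α) (t : Finset β) (f : α → ℂ) (g : β → ℂ) :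
    (expC s fun a => expC t fun b => f a * g b) = expC s f * expC t g := by
  rw [expC_ext (fun a => expC_const_mul t (f a) g)]
  exact expC_mul_const s (expC t g) f

private lemma pull1 (t : Finset α) (u : Finset β) (F : α → β → β → ℂ) :
    (expC t fun b => expC u fun c₀ => expC u fun c₁ => F b c₀ c₁)
      = expC u fun c₀ => expC u fun c₁ => expC t fun b => F b c₀ c₁ :=
  (expC_swap t u _).trans (expC_ext fun c₀ => expC_swap t u _)

private lemma pull2 (t : Finset α) (u : Finset β) (F : α → α → β → β → ℂ) :
    (expC t fun b₀ => expC t fun b₁ => expC u fun c₀ => expC u fun c₁ => F b₀ b₁ c₀ c₁)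
      = expC u fun c₀ => expC u fun c₁ => expC t fun b₀ => expC t fun b₁ => F b₀ b₁ c₀ c₁ :=
  (expC_ext fun b₀ => pull1 t u fun b₁ c₀ c₁ => F b₀ b₁ c₀ c₁).trans
    (pull1 t u fun b₀ c₀ c₁ => expC t fun b₁ => F b₀ b₁ c₀ c₁)

private lemma pull4 (s : Finset α) (t : Finset β) (u : Finset γ)
    (F : α → α → β → β → γ → γ → ℂ) :
    (expC s fun a₀ => expC s fun a₁ => expC t fun b₀ => expC t fun b₁ =>
        expC u fun c₀ => expC u fun c₁ => F a₀ a₁ b₀ b₁ c₀ c₁)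
      = expC u fun c₀ => expC u fun c₁ => expC s fun a₀ => expC s fun a₁ =>
          expC t fun b₀ => expC t fun b₁ => F a₀ a₁ b₀ b₁ c₀ c₁ :=
  (expC_ext fun a₀ => expC_ext fun a₁ =>
      pull2 t u fun b₀ b₁ c₀ c₁ => F a₀ a₁ b₀ b₁ c₀ c₁).trans
    (pull2 s u fun a₀ a₁ c₀ c₁ => expC t fun b₀ => expC t fun b₁ => F a₀ a₁ b₀ b₁ c₀ c₁)

private lemma expR_nonneg {s : Finset α} {r : α → ℝ} (h : ∀ x ∈ s, 0 ≤ r x) :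
    0 ≤ expR s r :=
  mul_nonneg (inv_nonneg.mpr (Nat.cast_nonneg _)) (Finset.sum_nonneg h)

private lemma expR_mono {s : Finset α} {r r' : α → ℝ} (h : ∀ x ∈ s, r x ≤ r' x) :
    expR s r ≤ expR s r' :=
  mul_le_mul_of_nonneg_left (Finset.sum_le_sum h) (inv_nonneg.mpr (Nat.cast_nonneg _))

private lemma sq_expR_le {s : Finset α} (hs : s.Nonempty) (r : α → ℝ) :
    (expR s r) ^ 2 ≤ expR s fun x => r x ^ 2 := by
  unfold expR
  have hc : (0 : ℝ) < s.card := by exact_mod_cast Finset.card_pos.mpr hs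
  have hcs := Finset.sum_mul_sq_le_sq_mul_sq s r (fun _ => 1)
  simp only [mul_one, one_pow, Finset.sum_const, nsmul_eq_mul] at hcs
  rw [mul_pow]
  have h2 : ((s.card : ℝ)⁻¹) ^ 2 * (∑ x ∈ s, r x) ^ 2
      ≤ ((s.card : ℝ)⁻¹) ^ 2 * ((∑ x ∈ s, r x ^ 2) * s.card) := by
    apply mul_le_mul_of_nonneg_left _ (by positivity)
    calc (∑ x ∈ s, r x) ^ 2 ≤ (∑ x ∈ s, r x ^ 2) * s.card := hcs
    _ = (∑ x ∈ s, r x ^ 2) * s.card := rfl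
  refine h2.trans_eq ?_
  field_simp

private lemma normSq_expC_le {s : Finset α} (hs : s.Nonempty) (w : α → ℂ) :
    Complex.normSq (expC s w) ≤ expR s fun x => Complex.normSq (w x) := by
  unfold expC expR
  have hc : (0 : ℝ) < s.card := by exact_mod_cast Finset.card_pos.mpr hs
  have habs : ‖∑ x ∈ s, w x‖ ≤ ∑ x ∈ s, ‖w x‖ :=
    norm_sum_le _ _
  have hcs := Finset.sum_mul_sq_le_sq_mul_sq s (fun x => ‖w x‖) (fun _ => 1)
  simp only [mul_one, one_pow, Finset.sum_const, nsmul_eq_mul] at hcs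
  have h1 : Complex.normSq ((s.card : ℂ)⁻¹ * ∑ x ∈ s, w x)
      = ((s.card : ℝ)⁻¹) ^ 2 * ‖∑ x ∈ s, w x‖ ^ 2 := by
    rw [Complex.normSq_eq_norm_sq, norm_mul, norm_inv, mul_pow]
    norm_num [Complex.norm_natCast]
  rw [h1]
  have h2 : ‖∑ x ∈ s, w x‖ ^ 2 ≤ (∑ x ∈ s, ‖w x‖) ^ 2 := by
    exact pow_le_pow_left₀ (norm_nonneg _) habs 2
  have h3 : ((s.card : ℝ)⁻¹) ^ 2 * ‖∑ x ∈ s, w x‖ ^ 2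
      ≤ ((s.card : ℝ)⁻¹) ^ 2 * ((∑ x ∈ s, ‖w x‖ ^ 2) * s.card) :=
    mul_le_mul_of_nonneg_left (h2.trans hcs) (by positivity)
  refine h3.trans_eq ?_
  have h4 : ∀ x, ‖w x‖ ^ 2 = Complex.normSq (w x) := fun x =>
    (Complex.sq_norm _)
  simp only [h4]
  field_simp

end Aux
section Aux2

open Finset Complex

variable {α β γ G : Type*}

@[simp] private lemma bsel_false (u v : α) : bsel false u v = u := rfl
@[simp] private lemma bsel_true (u v : α) : bsel true u v = v := rfl

private lemma cConj_zero (z : ℂ) : cConj 0 z = z := rfl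
private lemma cConj_one (z : ℂ) : cConj 1 z = (starRingEnd ℂ) z := rfl
private lemma cConj_two (z : ℂ) : cConj 2 z = z := rfl
private lemma cConj_three (z : ℂ) : cConj 3 z = (starRingEnd ℂ) z := rfl

private def cube2 : Bool × Bool ≃ (Fin 2 → Bool) where
  toFun p := ![p.1, p.2]
  invFun ω := (ω 0, ω 1)
  left_inv := by decide
  right_inv := by decide

private def cube3 : Bool × Bool × Bool ≃ (Fin 3 → Bool) where
  toFun p := ![p.1, p.2.1, p.2.2]
  invFun ω := (ω 0, ω 1, ω 2)
  left_inv := by decide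
  right_inv := by decide

private lemma prod_cube2 (T : (Fin 2 → Bool) → ℂ) :
    ∏ ε : Fin 2 → Bool, T ε
      = T ![false, false] * T ![false, true] * T ![true, false] * T ![true, true] := by
  rw [← Equiv.prod_comp cube2 T, Fintype.prod_prod_type]
  simp only [Fintype.prod_bool, cube2, Equiv.coe_fn_mk]
  ring

private lemma prod_cube3 (T : (Fin 3 → Bool) → ℂ) :
    ∏ ω : Fin 3 → Bool, T ω
      = T ![false, false, false] * T ![false, false, true]
        * T ![false, true, false] * T ![false, true, true]
        * T ![true, false, false] * T ![true, false, true]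
        * T ![true, true, false] * T ![true, true, true] := by
  rw [← Equiv.prod_comp cube3 T, Fintype.prod_prod_type]
  simp only [Fintype.prod_bool, cube3, Equiv.coe_fn_mk, Fintype.prod_prod_type]
  ring

private lemma wt2_00 : wt ![false, false] = 0 := by decide
private lemma wt2_01 : wt ![false, true] = 1 := by decide
private lemma wt2_10 : wt ![true, false] = 1 := by decide
private lemma wt2_11 : wt ![true, true] = 2 := by decide
private lemma wt3_000 : wt ![false, false, false] = 0 := by decide
private lemma wt3_001 : wt ![false, false, true] = 1 := by decide
private lemma wt3_010 : wt ![false, true, false] = 1 := by decide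
private lemma wt3_011 : wt ![false, true, true] = 2 := by decide
private lemma wt3_100 : wt ![true, false, false] = 1 := by decide
private lemma wt3_101 : wt ![true, false, true] = 2 := by decide
private lemma wt3_110 : wt ![true, true, false] = 2 := by decide
private lemma wt3_111 : wt ![true, true, true] = 3 := by decide

private lemma u2_integrand [Add G] (f : G → ℂ) (x₀ x₁ y₀ y₁ : G) :
    (∏ ε : Fin 2 → Bool, cConj (wt ε) (f (bsel (ε 0) x₀ x₁ + bsel (ε 1) y₀ y₁)))
      = (f (x₀ + y₀) * (starRingEnd ℂ) (f (x₀ + y₁)))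
        * (starRingEnd ℂ) (f (x₁ + y₀) * (starRingEnd ℂ) (f (x₁ + y₁))) := by
  rw [prod_cube2]
  simp only [wt2_00, wt2_01, wt2_10, wt2_11, cConj_zero, cConj_one, cConj_two,
    Matrix.cons_val_zero, Matrix.cons_val_one, Matrix.head_cons, bsel_false, bsel_true,
    map_mul, Complex.conj_conj]
  ring

private lemma u3_integrand [Add G] (f : G → ℂ) (x₀ x₁ y₀ y₁ z₀ z₁ : G) :
    (∏ ω : Fin 3 → Bool,
        cConj (wt ω) (f (bsel (ω 0) x₀ x₁ + bsel (ω 1) y₀ y₁ + bsel (ω 2) z₀ z₁)))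
      = ∏ ε : Fin 2 → Bool, cConj (wt ε)
          ((fun u => f (u + z₀) * (starRingEnd ℂ) (f (u + z₁)))
            (bsel (ε 0) x₀ x₁ + bsel (ε 1) y₀ y₁)) := by
  rw [prod_cube3, prod_cube2]
  simp only [wt2_00, wt2_01, wt2_10, wt2_11, wt3_000, wt3_001, wt3_010, wt3_011,
    wt3_100, wt3_101, wt3_110, wt3_111, cConj_zero, cConj_one, cConj_two, cConj_three,
    Matrix.cons_val_zero, Matrix.cons_val_one, Matrix.head_cons, Matrix.cons_val_two,
    Matrix.tail_cons, bsel_false, bsel_true, map_mul, Complex.conj_conj]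
  ring

end Aux2
section Aux3

open Finset Complex

variable {α β γ G : Type*}

private lemma u2form [Add G] (A B : Finset G) (f : G → ℂ) :
    (expC A fun x₀ => expC A fun x₁ => expC B fun y₀ => expC B fun y₁ =>
        ∏ ε : Fin 2 → Bool, cConj (wt ε) (f (bsel (ε 0) x₀ x₁ + bsel (ε 1) y₀ y₁)))
      = expC B fun y₀ => expC B fun y₁ =>
          ((Complex.normSq (expC A fun x => f (x + y₀) * (starRingEnd ℂ) (f (x + y₁))) : ℝ) : ℂ) := by
  have h1 : (expC A fun x₀ => expC A fun x₁ => expC B fun y₀ => expC B fun y₁ =>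
        ∏ ε : Fin 2 → Bool, cConj (wt ε) (f (bsel (ε 0) x₀ x₁ + bsel (ε 1) y₀ y₁)))
      = expC A fun x₀ => expC A fun x₁ => expC B fun y₀ => expC B fun y₁ =>
          (f (x₀ + y₀) * (starRingEnd ℂ) (f (x₀ + y₁)))
            * (starRingEnd ℂ) (f (x₁ + y₀) * (starRingEnd ℂ) (f (x₁ + y₁))) :=
    expC_ext fun x₀ => expC_ext fun x₁ => expC_ext fun y₀ => expC_ext fun y₁ =>
      u2_integrand f x₀ x₁ y₀ y₁
  rw [h1, pull2 A B]
  refine expC_ext fun y₀ => expC_ext fun y₁ => ?_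
  calc (expC A fun x₀ => expC A fun x₁ =>
          (f (x₀ + y₀) * (starRingEnd ℂ) (f (x₀ + y₁)))
            * (starRingEnd ℂ) (f (x₁ + y₀) * (starRingEnd ℂ) (f (x₁ + y₁))))
      = (expC A fun x => f (x + y₀) * (starRingEnd ℂ) (f (x + y₁)))
          * expC A (fun x₁ => (starRingEnd ℂ) (f (x₁ + y₀) * (starRingEnd ℂ) (f (x₁ + y₁)))) :=
        expC_mul_expC A A _ _
    _ = (expC A fun x => f (x + y₀) * (starRingEnd ℂ) (f (x + y₁)))
          * (starRingEnd ℂ) (expC A fun x => f (x + y₀) * (starRingEnd ℂ) (f (x + y₁))) := by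
        rw [conj_expC]
    _ = ((Complex.normSq (expC A fun x => f (x + y₀) * (starRingEnd ℂ) (f (x + y₁))) : ℝ) : ℂ) :=
        Complex.mul_conj _

private lemma u3form [Add G] (A B C : Finset G) (f : G → ℂ) :
    (expC A fun x₀ => expC A fun x₁ => expC B fun y₀ => expC B fun y₁ =>
        expC C fun z₀ => expC C fun z₁ =>
          ∏ ω : Fin 3 → Bool,
            cConj (wt ω) (f (bsel (ω 0) x₀ x₁ + bsel (ω 1) y₀ y₁ + bsel (ω 2) z₀ z₁)))
      = expC C fun z₀ => expC C fun z₁ =>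
          expC A fun x₀ => expC A fun x₁ => expC B fun y₀ => expC B fun y₁ =>
            ∏ ε : Fin 2 → Bool, cConj (wt ε)
              ((fun u => f (u + z₀) * (starRingEnd ℂ) (f (u + z₁)))
                (bsel (ε 0) x₀ x₁ + bsel (ε 1) y₀ y₁)) := by
  have h1 := expC_ext (s := A) fun x₀ => expC_ext (s := A) fun x₁ =>
    expC_ext (s := B) fun y₀ => expC_ext (s := B) fun y₁ =>
      expC_ext (s := C) fun z₀ => expC_ext (s := C) fun z₁ =>
        u3_integrand f x₀ x₁ y₀ y₁ z₀ z₁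
  rw [h1, pull4 A B C]

end Aux3
section Aux4

open Finset Complex

variable {p n ℓ : ℕ}

private lemma qAtom_zero [NeZero p] (F : QuadFactor p n ℓ 0) (a : Fin ℓ → ZMod p) :
    qAtom F (a, 0) = linAtom F.L a := by
  ext x
  simp [qAtom, linAtom]

private lemma bmu_zero [NeZero p] (M : Fin 0 → Matrix (Fin n) (Fin n) (ZMod p))
    (x y : Fin n → ZMod p) : bmu M 0 x y = 1 := by
  have h1 : bilinSet M 0 = Finset.univ := by
    ext xy; simp [bilinSet]
  have h2 : ((Finset.univ : Finset ((Fin n → ZMod p) × (Fin n → ZMod p))).card : ℝ)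
      = (p : ℝ) ^ (2 * n) := by
    simp only [Finset.card_univ, Fintype.card_prod, Fintype.card_fun, ZMod.card,
      Fintype.card_fin]
    push_cast
    rw [two_mul, pow_add]
  have hp : (0 : ℝ) < (p : ℝ) ^ (2 * n) := by
    have : 0 < p := Nat.pos_of_ne_zero (NeZero.ne p)
    positivity
  simp only [bmu, h1, Finset.mem_univ, if_true, h2]
  exact div_self hp.ne'

private lemma expC_shift [NeZero p] {L : Fin ℓ → (Fin n → ZMod p)}
    {a b : Fin ℓ → ZMod p} {x : Fin n → ZMod p} (hx : x ∈ linAtom L a)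
    (h : (Fin n → ZMod p) → ℂ) :
    (expC (linAtom L b) fun y => h (x + y)) = expC (linAtom L (a + b)) h := by
  have hxa : ∀ i, x ⬝ᵥ L i = a i := by
    simpa [linAtom] using hx
  have hmem : ∀ y : Fin n → ZMod p,
      y ∈ linAtom L b → x + y ∈ linAtom L (a + b) := by
    intro y hy
    have hyb : ∀ i, y ⬝ᵥ L i = b i := by simpa [linAtom] using hy
    simp [linAtom, add_dotProduct, hxa, hyb]
  have hmem' : ∀ s : Fin n → ZMod p,
      s ∈ linAtom L (a + b) → -x + s ∈ linAtom L b := by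
    intro s hs
    have hsab : ∀ i, s ⬝ᵥ L i = a i + b i := by simpa [linAtom] using hs
    simp [linAtom, add_dotProduct, neg_dotProduct, hxa, hsab]
  have hcard : (linAtom L b).card = (linAtom L (a + b)).card := by
    refine Finset.card_bij' (fun y _ => x + y) (fun s _ => -x + s)
      hmem hmem' ?_ ?_
    · intro y _; simp
    · intro s _; simp
  have hsum : ∑ y ∈ linAtom L b, h (x + y) = ∑ s ∈ linAtom L (a + b), h s := by
    refine Finset.sum_bij' (fun y _ => x + y) (fun s _ => -x + s)
      hmem hmem' ?_ ?_ ?_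
    · intro y _; simp
    · intro s _; simp
    · intro y _; rfl
  unfold expC
  rw [hcard, hsum]

private lemma linAtom_nonempty [NeZero p] (hp : p.Prime)
    {L : Fin ℓ → (Fin n → ZMod p)} (hL : LinearIndependent (ZMod p) L)
    (a : Fin ℓ → ZMod p) : (linAtom L a).Nonempty := by
  haveI : Fact p.Prime := ⟨hp⟩
  classical
  set M : Matrix (Fin ℓ) (Fin n) (ZMod p) := Matrix.of L with hM
  have hrank : M.rank = ℓ := by
    have := LinearIndependent.rank_matrix (M := M) hL
    simpa using this
  have htop : LinearMap.range M.mulVecLin = ⊤ := by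
    apply Submodule.eq_top_of_finrank_eq
    rw [← Matrix.rank, hrank, Module.finrank_fintype_fun_eq_card, Fintype.card_fin]
  have hsurj : Function.Surjective M.mulVec := by
    intro b
    have : b ∈ LinearMap.range M.mulVecLin := htop ▸ Submodule.mem_top
    obtain ⟨x, hx⟩ := this
    exact ⟨x, hx⟩
  obtain ⟨x, hx⟩ := hsurj a
  refine ⟨x, ?_⟩
  simp only [linAtom, Finset.mem_filter, Finset.mem_univ, true_and]
  intro i
  have := congrFun hx i
  rw [← this]
  simp [Matrix.mulVec, hM, dotProduct_comm]

end Aux4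
private lemma norm_step {x y : ℝ} (hx : 0 ≤ x) (h : x ^ 2 ≤ y) :
    x ^ ((1:ℝ)/4) ≤ y ^ ((1:ℝ)/8) := by
  have h2 : x ^ ((1:ℝ)/4) = (x ^ 2) ^ ((1:ℝ)/8) := by
    rw [← Real.rpow_natCast x 2, ← Real.rpow_mul hx]
    norm_num
  rw [h2]
  exact Real.rpow_le_rpow (pow_nonneg hx 2) h (by norm_num)

/-- Local `U³` dominates local `U²` on linear factors. -/
theorem statement11 (p : ℕ) [NeZero p] (hp : p.Prime) (hp2 : 2 < p) (n ℓ : ℕ)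
    (F : QuadFactor p n ℓ 0) (a₁ a₂ a₃ : Fin ℓ → ZMod p)
    (f : (Fin n → ZMod p) → ℂ) :
    localU2Norm F.L (a₁ + a₂) a₃ f ≤
      localU3Norm F (a₁, 0) (a₂, 0) (a₃, 0) 0 0 0 f := by
  classical
  have hne : ∀ a : Fin ℓ → ZMod p, (linAtom F.L a).Nonempty :=
    fun a => linAtom_nonempty hp F.indep a
  -- closed form for the local U² inner product
  have h2 : localU2Inner F.L (a₁ + a₂) a₃ (fun _ => f)
      = (((expR (linAtom F.L a₃) fun z₀ => expR (linAtom F.L a₃) fun z₁ =>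
          Complex.normSq (expC (linAtom F.L (a₁ + a₂)) fun x =>
            f (x + z₀) * (starRingEnd ℂ) (f (x + z₁)))) : ℝ) : ℂ) :=
    (u2form (linAtom F.L (a₁ + a₂)) (linAtom F.L a₃) f).trans
      ((expC_ext fun z₀ => expC_ofReal (linAtom F.L a₃) _).trans
        (expC_ofReal (linAtom F.L a₃) _))
  -- the local U³ inner product with trivial quadratic part
  have e3 : localU3Inner F (a₁, 0) (a₂, 0) (a₃, 0) 0 0 0 (fun _ => f)
      = expC (linAtom F.L a₁) fun x₀ => expC (linAtom F.L a₁) fun x₁ =>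
        expC (linAtom F.L a₂) fun y₀ => expC (linAtom F.L a₂) fun y₁ =>
        expC (linAtom F.L a₃) fun z₀ => expC (linAtom F.L a₃) fun z₁ =>
          ∏ ω : Fin 3 → Bool,
            cConj (wt ω) (f (bsel (ω 0) x₀ x₁ + bsel (ω 1) y₀ y₁ + bsel (ω 2) z₀ z₁)) := by
    simp only [localU3Inner, qAtom_zero, bmu_zero, Complex.ofReal_one,
      Finset.prod_const_one, one_mul]
  have h3 : localU3Inner F (a₁, 0) (a₂, 0) (a₃, 0) 0 0 0 (fun _ => f)
      = (((expR (linAtom F.L a₃) fun z₀ => expR (linAtom F.L a₃) fun z₁ =>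
          expR (linAtom F.L a₂) fun y₀ => expR (linAtom F.L a₂) fun y₁ =>
            Complex.normSq (expC (linAtom F.L a₁) fun x =>
              (f (x + y₀ + z₀) * (starRingEnd ℂ) (f (x + y₀ + z₁)))
                * (starRingEnd ℂ) (f (x + y₁ + z₀) * (starRingEnd ℂ) (f (x + y₁ + z₁))))) : ℝ) : ℂ) :=
    e3.trans ((u3form (linAtom F.L a₁) (linAtom F.L a₂) (linAtom F.L a₃) f).trans
      ((expC_ext fun z₀ => expC_ext fun z₁ =>
          u2form (linAtom F.L a₁) (linAtom F.L a₂)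
            (fun u => f (u + z₀) * (starRingEnd ℂ) (f (u + z₁)))).trans
        ((expC_ext fun z₀ => expC_ext fun z₁ =>
            (expC_ext fun y₀ => expC_ofReal (linAtom F.L a₂) _).trans
              (expC_ofReal (linAtom F.L a₂) _)).trans
          ((expC_ext fun z₀ => expC_ofReal (linAtom F.L a₃) _).trans
            (expC_ofReal (linAtom F.L a₃) _)))))
  -- averaging the inner function over the middle atoms gives back g
  have hW : ∀ z₀ z₁ : Fin n → ZMod p,
      (expC (linAtom F.L a₂) fun y₀ => expC (linAtom F.L a₂) fun y₁ =>
          expC (linAtom F.L a₁) fun x =>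
            (f (x + y₀ + z₀) * (starRingEnd ℂ) (f (x + y₀ + z₁)))
              * (starRingEnd ℂ) (f (x + y₁ + z₀) * (starRingEnd ℂ) (f (x + y₁ + z₁))))
        = ((Complex.normSq (expC (linAtom F.L (a₁ + a₂)) fun x =>
              f (x + z₀) * (starRingEnd ℂ) (f (x + z₁))) : ℝ) : ℂ) := by
    intro z₀ z₁
    refine ((pull1 (linAtom F.L a₁) (linAtom F.L a₂)
        (fun x y₀ y₁ =>
          (f (x + y₀ + z₀) * (starRingEnd ℂ) (f (x + y₀ + z₁)))
            * (starRingEnd ℂ) (f (x + y₁ + z₀) * (starRingEnd ℂ) (f (x + y₁ + z₁))))).symm).trans ?_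
    refine (expC_congr' fun x hx => ?_).trans (expC_const (hne a₁) _)
    refine (expC_mul_expC (linAtom F.L a₂) (linAtom F.L a₂)
        (fun y₀ => f (x + y₀ + z₀) * (starRingEnd ℂ) (f (x + y₀ + z₁)))
        (fun y₁ => (starRingEnd ℂ) (f (x + y₁ + z₀) * (starRingEnd ℂ) (f (x + y₁ + z₁))))).trans ?_
    have hshift : (expC (linAtom F.L a₂) fun y =>
        f (x + y + z₀) * (starRingEnd ℂ) (f (x + y + z₁)))
        = expC (linAtom F.L (a₁ + a₂)) fun s => f (s + z₀) * (starRingEnd ℂ) (f (s + z₁)) :=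
      expC_shift hx (fun s => f (s + z₀) * (starRingEnd ℂ) (f (s + z₁)))
    rw [← conj_expC, hshift]
    exact Complex.mul_conj _
  -- put everything together
  unfold localU2Norm localU3Norm
  rw [h2, h3, Complex.ofReal_re, Complex.ofReal_re]
  refine norm_step (expR_nonneg fun z₀ _ => expR_nonneg fun z₁ _ => Complex.normSq_nonneg _) ?_
  refine (sq_expR_le (hne _) _).trans (expR_mono fun z₀ _ =>
    (sq_expR_le (hne _) _).trans (expR_mono fun z₁ _ => ?_))
  refine le_trans ?_ ((normSq_expC_le (hne _) _).trans
    (expR_mono fun y₀ _ => normSq_expC_le (hne _) _))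
  rw [hW z₀ z₁, Complex.normSq_ofReal, sq]

end TW
end

section
/- Let p > 2 be prime, let ω be a primitive p-th root of unity in ℂ, and let B = (L,Q) be a quadratic factor on 𝔽_p^n of complexity (ℓ,q) and rank at least τ, with Q = {M_1,…,M_q}. There is an absolute constant K such that: (i) for any nontrivial 𝔽_p-linear combination M of M_1,…,M_q and any c, d ∈ 𝔽_p^n, |E_{x,y∈𝔽_p^n} ω^{xᵀMy + cᵀx + dᵀy}| ≤ K·p^{−τ}; (ii) for any label a ∈ 𝔽_p^{ℓ+q} with B(a) nonempty and any nontrivial linear combination M of M_1,…,M_q, the proportion of x ∈ B(a) with x ∈ ker(M) is at most K·p^{ℓ+q−τ/2}; (iii) for any b ∈ 𝔽_p^q, |E_{x,y∈𝔽_p^n} 1_{β(b)}(x,y) − p^{−q}| ≤ K·p^{−τ}. -/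
open scoped BigOperators Matrix

namespace TW

namespace TWA
open Finset

set_option linter.unusedSectionVars false

variable {p : ℕ} [NeZero p]

noncomputable def e (ζ : ℂ) (t : ZMod p) : ℂ := ζ ^ t.val

variable {ζ : ℂ}

lemma pow_val_mod (h1 : ζ ^ p = 1) (m : ℕ) : ζ ^ (m % p) = ζ ^ m := by
  conv_rhs => rw [← Nat.mod_add_div m p, pow_add, pow_mul, h1, one_pow, mul_one]

lemma e_add (h1 : ζ ^ p = 1) (a b : ZMod p) : e ζ (a + b) = e ζ a * e ζ b := by
  rw [e, ZMod.val_add, pow_val_mod h1, pow_add]; rfl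

lemma e_zero : e ζ (0 : ZMod p) = 1 := by
  simp [e, ZMod.val_zero]

lemma e_norm (h1 : ζ ^ p = 1) (t : ZMod p) : ‖e ζ t‖ = 1 := by
  have hz : ‖ζ‖ = 1 := Complex.norm_eq_one_of_pow_eq_one h1 (NeZero.ne p)
  simp [e, norm_pow, hz]

lemma e_conj (h1 : ζ ^ p = 1) (t : ZMod p) :
    (starRingEnd ℂ) (e ζ t) = e ζ (-t) := by
  have h2 : e ζ t * e ζ (-t) = 1 := by rw [← e_add h1, add_neg_cancel, e_zero]
  have h3 : e ζ t * (starRingEnd ℂ) (e ζ t) = 1 := by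
    rw [Complex.mul_conj]
    norm_cast
    rw [Complex.normSq_eq_norm_sq, e_norm h1, one_pow]
  have hne : e ζ t ≠ 0 := by
    intro h; rw [h, zero_mul] at h2; exact one_ne_zero h2.symm
  have := h3.trans h2.symm
  exact mul_left_cancel₀ hne this

lemma e_sum (h1 : ζ ^ p = 1) {ι : Type*} (s : Finset ι) (f : ι → ZMod p) :
    e ζ (∑ i ∈ s, f i) = ∏ i ∈ s, e ζ (f i) := by
  induction s using Finset.cons_induction with
  | empty => simp [e_zero]
  | cons i s hi ih => rw [Finset.sum_cons, Finset.prod_cons, e_add h1, ih]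

lemma sum_e (hζ : IsPrimitiveRoot ζ p) (hp : 1 < p) : ∑ t : ZMod p, e ζ t = 0 := by
  have : ∑ t : ZMod p, e ζ t = ∑ i ∈ Finset.range p, ζ ^ i := by
    refine Finset.sum_nbij' (fun t => t.val) (fun i => (i : ZMod p)) ?_ ?_ ?_ ?_ ?_
    · intro t _; exact Finset.mem_range.2 (ZMod.val_lt t)
    · intro i _; exact Finset.mem_univ _
    · intro t _; simp [ZMod.natCast_val, ZMod.cast_id]
    · intro i hi; exact ZMod.val_natCast_of_lt (Finset.mem_range.1 hi)
    · intro t _; rfl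
  rw [this, hζ.geom_sum_eq_zero hp]
lemma sum_e_mul [Fact p.Prime] (hζ : IsPrimitiveRoot ζ p) (a : ZMod p) :
    ∑ t : ZMod p, e ζ (a * t) = if a = 0 then (p : ℂ) else 0 := by
  have hp : 1 < p := (Fact.out : p.Prime).one_lt
  by_cases ha : a = 0
  · simp [ha, e_zero, ZMod.card]
  · rw [if_neg ha, ← sum_e hζ hp]
    exact Fintype.sum_bijective (a * ·) (Equiv.mulLeft₀ a ha).bijective _ _ (fun t => rfl)

lemma sum_dot [Fact p.Prime] (hζ : IsPrimitiveRoot ζ p) {n : ℕ} (v : Fin n → ZMod p) :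
    ∑ x : Fin n → ZMod p, e ζ (v ⬝ᵥ x) = if v = 0 then ((p : ℂ)) ^ n else 0 := by
  have h1 : ζ ^ p = 1 := hζ.pow_eq_one
  have : ∀ x : Fin n → ZMod p, e ζ (v ⬝ᵥ x) = ∏ i, e ζ (v i * x i) := by
    intro x; rw [dotProduct, e_sum h1]
  simp_rw [this]
  rw [← Fintype.prod_sum (fun i (t : ZMod p) => e ζ (v i * t))]
  by_cases hv : v = 0
  · simp [hv, e_zero, Finset.prod_const]
  · obtain ⟨i, hi⟩ : ∃ i, v i ≠ 0 := by
      by_contra h; push_neg at h; exact hv (funext h)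
    rw [if_neg hv]
    refine Finset.prod_eq_zero (Finset.mem_univ i) ?_
    rw [sum_e_mul hζ, if_neg hi]

lemma card_ker [Fact p.Prime] {n : ℕ} (M : Matrix (Fin n) (Fin n) (ZMod p)) :
    ((Finset.univ.filter fun x : Fin n → ZMod p => M *ᵥ x = 0).card : ℝ)
      = (p : ℝ) ^ (n - M.rank) ∧ M.rank ≤ n := by
  have hrle : M.rank ≤ n := (Matrix.rank_le_card_width M).trans (by simp)
  refine ⟨?_, hrle⟩
  haveI : Fintype (LinearMap.ker M.mulVecLin) := Fintype.ofFinite _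
  have hcard : (Finset.univ.filter fun x : Fin n → ZMod p => M *ᵥ x = 0).card
      = Fintype.card (LinearMap.ker M.mulVecLin) := by
    rw [← Fintype.card_subtype]
    exact Fintype.card_congr (Equiv.subtypeEquivRight (by
      intro x; simp [LinearMap.mem_ker, Matrix.mulVecLin_apply]))
  rw [hcard]
  have := Module.card_eq_pow_finrank (K := ZMod p) (V := LinearMap.ker M.mulVecLin)
  rw [this, ZMod.card]
  have hrn : Module.finrank (ZMod p) (LinearMap.ker M.mulVecLin) = n - M.rank := by
    have h := LinearMap.finrank_range_add_finrank_ker (M.mulVecLin)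
    have hfin : Module.finrank (ZMod p) (Fin n → ZMod p) = n := by simp
    rw [hfin] at h
    have : M.rank = Module.finrank (ZMod p) (LinearMap.range M.mulVecLin) := rfl
    omega
  rw [hrn]
  push_cast
  rfl

lemma card_fiber_le [Fact p.Prime] {n : ℕ} (M : Matrix (Fin n) (Fin n) (ZMod p)) (u : Fin n → ZMod p) :
    (Finset.univ.filter fun x : Fin n → ZMod p => M *ᵥ x = u).card
      ≤ (Finset.univ.filter fun x : Fin n → ZMod p => M *ᵥ x = 0).card := by
  rcases Finset.eq_empty_or_nonempty (Finset.univ.filter fun x : Fin n → ZMod p => M *ᵥ x = u) with h | ⟨x₀, hx₀⟩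
  · simp [h]
  · have hMx₀ : M *ᵥ x₀ = u := (Finset.mem_filter.1 hx₀).2
    apply Finset.card_le_card_of_injOn (fun x => x - x₀)
    · intro x hx
      have hx' : M *ᵥ x = u := (Finset.mem_filter.1 hx).2
      simp only [Finset.mem_coe, Finset.mem_filter, Finset.mem_univ, true_and]
      rw [Matrix.mulVec_sub, hx', hMx₀, sub_self]
    · intro a _ b _ hab
      simpa using congrArg (· + x₀) hab


lemma dot_symm {n : ℕ} {M : Matrix (Fin n) (Fin n) (ZMod p)} (hM : M.IsSymm)
    (h y : Fin n → ZMod p) : h ⬝ᵥ (M *ᵥ y) = (M *ᵥ h) ⬝ᵥ y := by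
  rw [Matrix.dotProduct_mulVec]
  congr 1
  rw [← hM.eq, Matrix.vecMul_transpose, hM.eq]

lemma two_ne_zero' [Fact p.Prime] (hp2 : 2 < p) : (2 : ZMod p) ≠ 0 := by
  have : ((2 : ℕ) : ZMod p) ≠ 0 := by
    rw [Ne, ZMod.natCast_eq_zero_iff]
    intro h
    exact absurd (Nat.le_of_dvd (by norm_num) h) (by omega)
  simpa using this

lemma gauss_norm_sq [Fact p.Prime] (hζ : IsPrimitiveRoot ζ p) (hp2 : 2 < p) {n : ℕ}
    (M : Matrix (Fin n) (Fin n) (ZMod p)) (hM : M.IsSymm) (c : Fin n → ZMod p) :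
    ‖∑ x : Fin n → ZMod p, e ζ (x ⬝ᵥ (M *ᵥ x) + c ⬝ᵥ x)‖ ^ 2
      ≤ (p : ℝ) ^ n * (p : ℝ) ^ (n - M.rank) := by
  have h1 : ζ ^ p = 1 := hζ.pow_eq_one
  set f : (Fin n → ZMod p) → ℂ := fun x => e ζ (x ⬝ᵥ (M *ᵥ x) + c ⬝ᵥ x) with hf
  set S : ℂ := ∑ x : Fin n → ZMod p, f x with hS
  have key : S * (starRingEnd ℂ) S
      = ∑ h : Fin n → ZMod p,
          e ζ (h ⬝ᵥ (M *ᵥ h) + c ⬝ᵥ h) * (if M *ᵥ h = 0 then ((p : ℂ)) ^ n else 0) := by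
    have hconj : (starRingEnd ℂ) S = ∑ y : Fin n → ZMod p, e ζ (-(y ⬝ᵥ (M *ᵥ y) + c ⬝ᵥ y)) := by
      rw [hS, map_sum]
      exact Finset.sum_congr rfl fun y _ => e_conj h1 _
    rw [hconj, hS, Finset.sum_mul_sum]
    have swap : ∀ x y : Fin n → ZMod p,
        f x * e ζ (-(y ⬝ᵥ (M *ᵥ y) + c ⬝ᵥ y)) = e ζ ((x ⬝ᵥ (M *ᵥ x) + c ⬝ᵥ x) + -(y ⬝ᵥ (M *ᵥ y) + c ⬝ᵥ y)) := by
      intro x y; rw [hf, ← e_add h1]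
    calc (∑ x : Fin n → ZMod p, ∑ y : Fin n → ZMod p,
            f x * e ζ (-(y ⬝ᵥ (M *ᵥ y) + c ⬝ᵥ y)))
        = ∑ y : Fin n → ZMod p, ∑ x : Fin n → ZMod p,
            e ζ ((x ⬝ᵥ (M *ᵥ x) + c ⬝ᵥ x) + -(y ⬝ᵥ (M *ᵥ y) + c ⬝ᵥ y)) := by
          rw [Finset.sum_comm]
          exact Finset.sum_congr rfl fun y _ => Finset.sum_congr rfl fun x _ => swap x y
      _ = ∑ y : Fin n → ZMod p, ∑ h : Fin n → ZMod p,
            e ζ (((h + y) ⬝ᵥ (M *ᵥ (h + y)) + c ⬝ᵥ (h + y)) + -(y ⬝ᵥ (M *ᵥ y) + c ⬝ᵥ y)) := by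
          refine Finset.sum_congr rfl fun y _ => ?_
          exact (Fintype.sum_bijective (· + y) (Equiv.addRight y).bijective _ _ (fun h => rfl)).symm
      _ = ∑ y : Fin n → ZMod p, ∑ h : Fin n → ZMod p,
            e ζ (h ⬝ᵥ (M *ᵥ h) + c ⬝ᵥ h) * e ζ (((2 : ZMod p) • (M *ᵥ h)) ⬝ᵥ y) := by
          refine Finset.sum_congr rfl fun y _ => Finset.sum_congr rfl fun h _ => ?_
          rw [← e_add h1]
          congr 1
          have hsy : h ⬝ᵥ (M *ᵥ y) = (M *ᵥ h) ⬝ᵥ y := dot_symm hM h y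
          have hyh : y ⬝ᵥ (M *ᵥ h) = (M *ᵥ h) ⬝ᵥ y := dotProduct_comm y _
          rw [Matrix.mulVec_add, dotProduct_add, add_dotProduct,
            add_dotProduct, dotProduct_add, hsy, hyh]
          rw [smul_dotProduct]
          ring_nf
      _ = ∑ h : Fin n → ZMod p,
            e ζ (h ⬝ᵥ (M *ᵥ h) + c ⬝ᵥ h) * (if M *ᵥ h = 0 then ((p : ℂ)) ^ n else 0) := by
          rw [Finset.sum_comm]
          refine Finset.sum_congr rfl fun h _ => ?_
          rw [← Finset.mul_sum, sum_dot hζ]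
          congr 2
          simp only [smul_eq_zero, eq_iff_iff]
          constructor
          · rintro (h2 | hv)
            · exact absurd h2 (two_ne_zero' hp2)
            · exact hv
          · exact fun hv => Or.inr hv
  have hnorm : ‖S‖ ^ 2 = ‖S * (starRingEnd ℂ) S‖ := by
    rw [norm_mul, RCLike.norm_conj, sq]
  rw [hnorm, key]
  refine (norm_sum_le _ _).trans ?_
  have hbound : ∀ h : Fin n → ZMod p,
      ‖e ζ (h ⬝ᵥ (M *ᵥ h) + c ⬝ᵥ h) * (if M *ᵥ h = 0 then ((p : ℂ)) ^ n else 0)‖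
        = (if M *ᵥ h = 0 then ((p : ℝ)) ^ n else 0) := by
    intro h
    rw [norm_mul, e_norm h1, one_mul]
    split <;> simp
  calc ∑ h : Fin n → ZMod p, ‖e ζ (h ⬝ᵥ (M *ᵥ h) + c ⬝ᵥ h) * (if M *ᵥ h = 0 then ((p : ℂ)) ^ n else 0)‖
      = ∑ h : Fin n → ZMod p, (if M *ᵥ h = 0 then ((p : ℝ)) ^ n else 0) := by
        exact Finset.sum_congr rfl fun h _ => hbound h
    _ = ((Finset.univ.filter fun h : Fin n → ZMod p => M *ᵥ h = 0).card : ℝ) * (p : ℝ) ^ n := by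
        rw [← Finset.sum_filter, Finset.sum_const, nsmul_eq_mul]
    _ ≤ (p : ℝ) ^ n * (p : ℝ) ^ (n - M.rank) := by
        rw [(card_ker M).1, mul_comm]


lemma count_expand [Fact p.Prime] (hζ : IsPrimitiveRoot ζ p) {α ι : Type*} [Fintype α] [Fintype ι] [DecidableEq ι]
    (g : α → ι → ZMod p) [DecidablePred fun x : α => ∀ j, g x j = 0] :
    ((p : ℂ)) ^ (Fintype.card ι) * ((Finset.univ.filter fun x : α => ∀ j, g x j = 0).card : ℂ)
      = ∑ s : ι → ZMod p, ∑ x : α, e ζ (∑ j, s j * g x j) := by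
  have h1 := hζ.pow_eq_one
  rw [Finset.sum_comm]
  symm
  have hpoint : ∀ x : α, ∑ s : ι → ZMod p, e ζ (∑ j, s j * g x j)
      = if (∀ j, g x j = 0) then ((p : ℂ)) ^ (Fintype.card ι) else 0 := by
    intro x
    have h2 : ∀ s : ι → ZMod p, e ζ (∑ j, s j * g x j) = ∏ j, e ζ (g x j * s j) := by
      intro s
      rw [e_sum h1]
      exact Finset.prod_congr rfl fun j _ => by rw [mul_comm]
    simp_rw [h2]
    rw [← Fintype.prod_sum (fun j (t : ZMod p) => e ζ (g x j * t))]
    by_cases hx : ∀ j, g x j = 0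
    · rw [if_pos hx]
      have : ∀ j : ι, ∑ t : ZMod p, e ζ (g x j * t) = (p : ℂ) := by
        intro j; rw [sum_e_mul hζ, if_pos (hx j)]
      simp_rw [this]
      rw [Finset.prod_const, Finset.card_univ]
    · rw [if_neg hx]
      obtain ⟨j, hj⟩ := not_forall.1 hx
      refine Finset.prod_eq_zero (Finset.mem_univ j) ?_
      rw [sum_e_mul hζ, if_neg hj]
  calc ∑ x : α, ∑ s : ι → ZMod p, e ζ (∑ j, s j * g x j)
      = ∑ x : α, if (∀ j, g x j = 0) then ((p : ℂ)) ^ (Fintype.card ι) else 0 :=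
        Finset.sum_congr rfl fun x _ => hpoint x
    _ = ((Finset.univ.filter fun x : α => ∀ j, g x j = 0).card : ℂ) * (p : ℂ) ^ (Fintype.card ι) := by
        rw [← Finset.sum_filter, Finset.sum_const, nsmul_eq_mul]
    _ = _ := by ring

lemma bilin_sum_norm_le [Fact p.Prime] (hζ : IsPrimitiveRoot ζ p) {n : ℕ}
    (N : Matrix (Fin n) (Fin n) (ZMod p)) (c d : Fin n → ZMod p) :
    ‖∑ x : Fin n → ZMod p, ∑ y : Fin n → ZMod p, e ζ (x ⬝ᵥ (N *ᵥ y) + c ⬝ᵥ x + d ⬝ᵥ y)‖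
      ≤ (p : ℝ) ^ n * (p : ℝ) ^ (n - N.rank) := by
  have h1 := hζ.pow_eq_one
  have hinner : ∀ x : Fin n → ZMod p,
      ∑ y : Fin n → ZMod p, e ζ (x ⬝ᵥ (N *ᵥ y) + c ⬝ᵥ x + d ⬝ᵥ y)
        = e ζ (c ⬝ᵥ x) * (if (x ᵥ* N) + d = 0 then ((p : ℂ)) ^ n else 0) := by
    intro x
    rw [← sum_dot hζ ((x ᵥ* N) + d), Finset.mul_sum]
    refine Finset.sum_congr rfl fun y _ => ?_
    rw [← e_add h1]
    congr 1
    rw [add_dotProduct, ← Matrix.dotProduct_mulVec]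
    ring
  simp_rw [hinner]
  refine (norm_sum_le _ _).trans ?_
  have hb : ∀ x : Fin n → ZMod p,
      ‖e ζ (c ⬝ᵥ x) * (if (x ᵥ* N) + d = 0 then ((p : ℂ)) ^ n else 0)‖
        = (if Nᵀ *ᵥ x = -d then ((p : ℝ)) ^ n else 0) := by
    intro x
    rw [norm_mul, e_norm h1, one_mul]
    have hcond : ((x ᵥ* N) + d = 0) ↔ (Nᵀ *ᵥ x = -d) := by
      rw [Matrix.mulVec_transpose, add_eq_zero_iff_eq_neg]
    simp only [hcond]
    split <;> simp
  calc ∑ x : Fin n → ZMod p, ‖e ζ (c ⬝ᵥ x) * (if (x ᵥ* N) + d = 0 then ((p : ℂ)) ^ n else 0)‖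
      = ∑ x : Fin n → ZMod p, (if Nᵀ *ᵥ x = -d then ((p : ℝ)) ^ n else 0) :=
        Finset.sum_congr rfl fun x _ => hb x
    _ = ((Finset.univ.filter fun x : Fin n → ZMod p => Nᵀ *ᵥ x = -d).card : ℝ) * (p : ℝ) ^ n := by
        rw [← Finset.sum_filter, Finset.sum_const, nsmul_eq_mul]
    _ ≤ ((Finset.univ.filter fun x : Fin n → ZMod p => Nᵀ *ᵥ x = 0).card : ℝ) * (p : ℝ) ^ n := by
        have := card_fiber_le Nᵀ (-d)
        have hle : ((Finset.univ.filter fun x : Fin n → ZMod p => Nᵀ *ᵥ x = -d).card : ℝ)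
            ≤ ((Finset.univ.filter fun x : Fin n → ZMod p => Nᵀ *ᵥ x = 0).card : ℝ) := by
          exact_mod_cast this
        exact mul_le_mul_of_nonneg_right hle (by positivity)
    _ = (p : ℝ) ^ n * (p : ℝ) ^ (n - N.rank) := by
        rw [(card_ker Nᵀ).1, Matrix.rank_transpose, mul_comm]



lemma dot_mulVec_sum {n q : ℕ} (x y : Fin n → ZMod p) (s : Fin q → ZMod p)
    (M : Fin q → Matrix (Fin n) (Fin n) (ZMod p)) :
    x ⬝ᵥ ((∑ j, s j • M j) *ᵥ y) = ∑ j, s j * (x ⬝ᵥ (M j *ᵥ y)) := by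
  classical
  have H : ∀ t : Finset (Fin q),
      x ⬝ᵥ ((∑ j ∈ t, s j • M j) *ᵥ y) = ∑ j ∈ t, s j * (x ⬝ᵥ (M j *ᵥ y)) := by
    intro t
    induction t using Finset.cons_induction with
    | empty => simp
    | cons j t hj ih =>
        rw [Finset.sum_cons, Finset.sum_cons, Matrix.add_mulVec, dotProduct_add,
          Matrix.smul_mulVec, dotProduct_smul, smul_eq_mul, ih]
  exact H Finset.univ

lemma sum_smul_dot {n ℓ : ℕ} (x : Fin n → ZMod p) (t : Fin ℓ → ZMod p)
    (L : Fin ℓ → (Fin n → ZMod p)) :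
    (∑ i, t i • L i) ⬝ᵥ x = ∑ i, t i * (x ⬝ᵥ L i) := by
  classical
  have H : ∀ u : Finset (Fin ℓ),
      (∑ i ∈ u, t i • L i) ⬝ᵥ x = ∑ i ∈ u, t i * (x ⬝ᵥ L i) := by
    intro u
    induction u using Finset.cons_induction with
    | empty => simp
    | cons i u hi ih =>
        rw [Finset.sum_cons, Finset.sum_cons, add_dotProduct,
          smul_dotProduct, smul_eq_mul, ih, dotProduct_comm]
  exact H Finset.univ

lemma atom_card_lower [Fact p.Prime] (hζ : IsPrimitiveRoot ζ p) {n ℓ q : ℕ}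
    (F : QuadFactor p n ℓ q) (a : (Fin ℓ → ZMod p) × (Fin q → ZMod p)) (ρ : ℝ) (hρ0 : 0 ≤ ρ)
    (hρ : ∀ lam : Fin q → ZMod p, lam ≠ 0 → ∀ c : Fin n → ZMod p,
      ‖∑ x : Fin n → ZMod p, e ζ (x ⬝ᵥ ((∑ j, lam j • F.M j) *ᵥ x) + c ⬝ᵥ x)‖ ≤ ρ) :
    (p : ℝ) ^ n - (p : ℝ) ^ (ℓ + q) * ρ ≤ (p : ℝ) ^ (ℓ + q) * ((qAtom F a).card : ℝ) := by
  classical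
  have h1 := hζ.pow_eq_one
  set g : (Fin n → ZMod p) → (Fin ℓ ⊕ Fin q) → ZMod p :=
    fun x => Sum.elim (fun i => x ⬝ᵥ F.L i - a.1 i) (fun j => x ⬝ᵥ (F.M j *ᵥ x) - a.2 j) with hg
  have hcount := count_expand (ζ := ζ) hζ g
  have hset : (Finset.univ.filter fun x : Fin n → ZMod p => ∀ j, g x j = 0) = qAtom F a := by
    ext x
    simp [hg, qAtom, Sum.forall, sub_eq_zero]
  have hcard : Fintype.card (Fin ℓ ⊕ Fin q) = ℓ + q := by simp
  rw [hset, hcard] at hcount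
  -- analyze the terms
  set T : ((Fin ℓ ⊕ Fin q) → ZMod p) → ℂ :=
    fun s => ∑ x : Fin n → ZMod p, e ζ (∑ j, s j * g x j) with hT
  have harg : ∀ (s : (Fin ℓ ⊕ Fin q) → ZMod p) (x : Fin n → ZMod p),
      (∑ j, s j * g x j)
        = (x ⬝ᵥ ((∑ j, s (Sum.inr j) • F.M j) *ᵥ x) + (∑ i, s (Sum.inl i) • F.L i) ⬝ᵥ x)
          + (-(∑ i, s (Sum.inl i) * a.1 i) - ∑ j, s (Sum.inr j) * a.2 j) := by
    intro s x
    rw [Fintype.sum_sum_type]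
    have h2 : x ⬝ᵥ ((∑ j, s (Sum.inr j) • F.M j) *ᵥ x)
        = ∑ j, s (Sum.inr j) * (x ⬝ᵥ (F.M j *ᵥ x)) := dot_mulVec_sum x x _ F.M
    have h3 : (∑ i, s (Sum.inl i) • F.L i) ⬝ᵥ x = ∑ i, s (Sum.inl i) * (x ⬝ᵥ F.L i) :=
      sum_smul_dot x _ F.L
    rw [h2, h3]
    simp only [hg, Sum.elim_inl, Sum.elim_inr, mul_sub]
    rw [Finset.sum_sub_distrib, Finset.sum_sub_distrib]
    ring
  have hT0 : T 0 = (p : ℂ) ^ n := by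
    rw [hT]
    simp only [Pi.zero_apply, zero_mul, Finset.sum_const_zero, e_zero]
    rw [Finset.sum_const, Finset.card_univ, nsmul_eq_mul, mul_one]
    norm_cast
    simp [ZMod.card]
  have hTs : ∀ s : (Fin ℓ ⊕ Fin q) → ZMod p, s ≠ 0 → ‖T s‖ ≤ ρ := by
    intro s hs
    have hfac : T s = e ζ ((-(∑ i, s (Sum.inl i) * a.1 i) - ∑ j, s (Sum.inr j) * a.2 j))
        * ∑ x : Fin n → ZMod p,
            e ζ (x ⬝ᵥ ((∑ j, s (Sum.inr j) • F.M j) *ᵥ x) + (∑ i, s (Sum.inl i) • F.L i) ⬝ᵥ x) := by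
      rw [hT, Finset.mul_sum]
      refine Finset.sum_congr rfl fun x _ => ?_
      rw [harg s x, e_add h1, mul_comm]
    by_cases hinr : (fun j => s (Sum.inr j)) = (0 : Fin q → ZMod p)
    · -- quadratic part vanishes; linear part is nonzero
      have hNs : (∑ j, s (Sum.inr j) • F.M j) = 0 := by
        refine Finset.sum_eq_zero fun j _ => ?_
        rw [show s (Sum.inr j) = 0 from congrFun hinr j, zero_smul]
      have hcs : (∑ i, s (Sum.inl i) • F.L i) ≠ 0 := by
        intro hzero
        have hall := Fintype.linearIndependent_iff.1 F.indep (fun i => s (Sum.inl i)) hzero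
        apply hs
        funext j
        cases j with
        | inl i => exact hall i
        | inr j => exact congrFun hinr j
      rw [hfac, hNs]
      simp only [Matrix.zero_mulVec, dotProduct_zero, zero_add]
      rw [sum_dot hζ, if_neg hcs, mul_zero, norm_zero]
      exact hρ0
    · rw [hfac, norm_mul, e_norm h1, one_mul]
      exact hρ (fun j => s (Sum.inr j)) hinr _
  -- put it together
  have hsplit : ∑ s : (Fin ℓ ⊕ Fin q) → ZMod p, T s
      = T 0 + ∑ s ∈ Finset.univ.erase 0, T s :=
    (Finset.add_sum_erase _ T (Finset.mem_univ 0)).symm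
  have hEnorm : ‖∑ s ∈ Finset.univ.erase (0 : (Fin ℓ ⊕ Fin q) → ZMod p), T s‖
      ≤ (p : ℝ) ^ (ℓ + q) * ρ := by
    refine (norm_sum_le _ _).trans ?_
    have : ∑ s ∈ Finset.univ.erase (0 : (Fin ℓ ⊕ Fin q) → ZMod p), ‖T s‖
        ≤ ∑ _s ∈ Finset.univ.erase (0 : (Fin ℓ ⊕ Fin q) → ZMod p), ρ := by
      refine Finset.sum_le_sum fun s hsmem => ?_
      exact hTs s (Finset.ne_of_mem_erase hsmem)
    refine this.trans ?_
    rw [Finset.sum_const, nsmul_eq_mul]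
    have hcle : ((Finset.univ.erase (0 : (Fin ℓ ⊕ Fin q) → ZMod p)).card : ℝ)
        ≤ (p : ℝ) ^ (ℓ + q) := by
      have h4 : (Finset.univ.erase (0 : (Fin ℓ ⊕ Fin q) → ZMod p)).card
          ≤ Fintype.card ((Fin ℓ ⊕ Fin q) → ZMod p) := by
        rw [← Finset.card_univ]
        exact Finset.card_le_card (Finset.erase_subset _ _)
      have h5 : Fintype.card ((Fin ℓ ⊕ Fin q) → ZMod p) = p ^ (ℓ + q) := by
        rw [Fintype.card_fun, ZMod.card, hcard]
      calc ((Finset.univ.erase (0 : (Fin ℓ ⊕ Fin q) → ZMod p)).card : ℝ)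
          ≤ (Fintype.card ((Fin ℓ ⊕ Fin q) → ZMod p) : ℝ) := by exact_mod_cast h4
        _ = (p : ℝ) ^ (ℓ + q) := by rw [h5]; push_cast; ring
    exact mul_le_mul_of_nonneg_right hcle hρ0
  have hkey : ((p : ℝ) ^ (ℓ + q) * ((qAtom F a).card : ℝ) - (p : ℝ) ^ n : ℝ)
      = ((∑ s ∈ Finset.univ.erase (0 : (Fin ℓ ⊕ Fin q) → ZMod p), T s).re) := by
    have hC : ((p : ℂ) ^ (ℓ + q) * ((qAtom F a).card : ℂ) - (p : ℂ) ^ n)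
        = ∑ s ∈ Finset.univ.erase (0 : (Fin ℓ ⊕ Fin q) → ZMod p), T s := by
      rw [hcount, hsplit, hT0]; ring
    have hRC : (((p : ℝ) ^ (ℓ + q) * ((qAtom F a).card : ℝ) - (p : ℝ) ^ n : ℝ) : ℂ)
        = ((p : ℂ) ^ (ℓ + q) * ((qAtom F a).card : ℂ) - (p : ℂ) ^ n) := by
      push_cast; ring
    have := congrArg Complex.re (hRC.trans hC)
    rwa [Complex.ofReal_re] at this
  have hre : |((p : ℝ) ^ (ℓ + q) * ((qAtom F a).card : ℝ) - (p : ℝ) ^ n)|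
      ≤ (p : ℝ) ^ (ℓ + q) * ρ := by
    rw [hkey]
    exact (Complex.abs_re_le_norm _).trans hEnorm
  have := (abs_le.1 hre).1
  linarith

end TWA

/-- Bilinear exponential sum estimates for high rank quadratic factors. -/
theorem statement16 :
    ∃ K : ℝ, 0 < K ∧
      ∀ (p : ℕ) [NeZero p], p.Prime → 2 < p →
        ∀ ζ : ℂ, IsPrimitiveRoot ζ p →
          ∀ (n ℓ q : ℕ) (F : QuadFactor p n ℓ q) (τ : ℝ), rankGe F τ →
            (∀ lam : Fin q → ZMod p, lam ≠ 0 → ∀ c d : Fin n → ZMod p,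
              ‖expC (Finset.univ : Finset (Fin n → ZMod p)) fun x =>
                  expC (Finset.univ : Finset (Fin n → ZMod p)) fun y =>
                    ζ ^ (ZMod.val (x ⬝ᵥ ((∑ j, lam j • F.M j) *ᵥ y) + c ⬝ᵥ x + d ⬝ᵥ y))‖
                ≤ K * (p : ℝ) ^ (-τ)) ∧
            (∀ a : (Fin ℓ → ZMod p) × (Fin q → ZMod p), (qAtom F a).Nonempty →
              ∀ lam : Fin q → ZMod p, lam ≠ 0 →
                ((((qAtom F a).filter fun x => (∑ j, lam j • F.M j) *ᵥ x = 0).card : ℝ) /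
                    ((qAtom F a).card : ℝ))
                  ≤ K * (p : ℝ) ^ ((ℓ : ℝ) + (q : ℝ) - τ / 2)) ∧
            (∀ b : Fin q → ZMod p,
              |((bilinSet F.M b).card : ℝ) / (p : ℝ) ^ (2 * n) - ((p : ℝ) ^ q)⁻¹|
                ≤ K * (p : ℝ) ^ (-τ)):= by
  refine ⟨3, by norm_num, ?_⟩
  intro p _ hp hp2 ζ hζ n ℓ q F τ hτ
  haveI : Fact p.Prime := ⟨hp⟩
  have hp0 : (0 : ℝ) < p := by positivity
  have hp1 : (1 : ℝ) < p := by exact_mod_cast hp.one_lt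
  have hp3 : (3 : ℝ) ≤ p := by exact_mod_cast hp2
  have hcardfun : ∀ m : ℕ, (Finset.univ : Finset (Fin m → ZMod p)).card = p ^ m := by
    intro m
    rw [Finset.card_univ, Fintype.card_fun, ZMod.card, Fintype.card_fin]
  refine ⟨?_, ?_, ?_⟩
  · -- part (i)
    intro lam hlam c d
    set N : Matrix (Fin n) (Fin n) (ZMod p) := ∑ j, lam j • F.M j with hN
    have hrankle : N.rank ≤ n := (TWA.card_ker N).2
    have hτr : τ ≤ (N.rank : ℝ) := hτ lam hlam
    have hE : (expC (Finset.univ : Finset (Fin n → ZMod p)) fun x =>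
        expC (Finset.univ : Finset (Fin n → ZMod p)) fun y =>
          ζ ^ (ZMod.val (x ⬝ᵥ (N *ᵥ y) + c ⬝ᵥ x + d ⬝ᵥ y)))
        = ((p : ℂ) ^ n)⁻¹ * (((p : ℂ) ^ n)⁻¹
            * ∑ x : Fin n → ZMod p, ∑ y : Fin n → ZMod p,
                TWA.e ζ (x ⬝ᵥ (N *ᵥ y) + c ⬝ᵥ x + d ⬝ᵥ y)) := by
      simp only [expC, hcardfun]
      rw [← Finset.mul_sum]
      push_cast
      rfl
    rw [hE]
    have hnorm1 : ‖((p : ℂ) ^ n)⁻¹‖ = ((p : ℝ) ^ n)⁻¹ := by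
      rw [norm_inv, norm_pow, Complex.norm_natCast]
    have hbil := TWA.bilin_sum_norm_le hζ N c d
    calc ‖((p : ℂ) ^ n)⁻¹ * (((p : ℂ) ^ n)⁻¹
            * ∑ x : Fin n → ZMod p, ∑ y : Fin n → ZMod p,
                TWA.e ζ (x ⬝ᵥ (N *ᵥ y) + c ⬝ᵥ x + d ⬝ᵥ y))‖
        = ((p : ℝ) ^ n)⁻¹ * (((p : ℝ) ^ n)⁻¹
            * ‖∑ x : Fin n → ZMod p, ∑ y : Fin n → ZMod p,
                TWA.e ζ (x ⬝ᵥ (N *ᵥ y) + c ⬝ᵥ x + d ⬝ᵥ y)‖) := by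
          rw [norm_mul, norm_mul, hnorm1]
      _ ≤ ((p : ℝ) ^ n)⁻¹ * (((p : ℝ) ^ n)⁻¹ * ((p : ℝ) ^ n * (p : ℝ) ^ (n - N.rank))) := by
          gcongr
      _ = (p : ℝ) ^ (n - N.rank) * ((p : ℝ) ^ n)⁻¹ := by
          field_simp
      _ = (p : ℝ) ^ (-(N.rank : ℝ)) := by
          rw [← Real.rpow_natCast (p : ℝ) (n - N.rank), ← Real.rpow_natCast (p : ℝ) n,
            ← Real.rpow_neg hp0.le, ← Real.rpow_add hp0]
          congr 1
          rw [Nat.cast_sub hrankle]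
          ring
      _ ≤ 3 * (p : ℝ) ^ (-τ) := by
          have h1 : (p : ℝ) ^ (-(N.rank : ℝ)) ≤ (p : ℝ) ^ (-τ) :=
            Real.rpow_le_rpow_of_exponent_le hp1.le (by linarith)
          nlinarith [Real.rpow_pos_of_pos hp0 (-τ)]
  · -- part (ii)
    intro a ha lam hlam
    classical
    set N : Matrix (Fin n) (Fin n) (ZMod p) := ∑ j, lam j • F.M j with hN
    have hrle : N.rank ≤ n := (TWA.card_ker N).2
    have hτr : τ ≤ (N.rank : ℝ) := hτ lam hlam
    have hD0 : (0 : ℝ) < ((qAtom F a).card : ℝ) := by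
      exact_mod_cast Finset.card_pos.2 ha
    by_cases hcase : τ ≤ 2 * ((ℓ : ℝ) + (q : ℝ))
    · -- trivial bound suffices
      have hle1 : ((((qAtom F a).filter fun x => N *ᵥ x = 0).card : ℝ))
          / ((qAtom F a).card : ℝ) ≤ 1 := by
        rw [div_le_one hD0]
        exact_mod_cast Finset.card_le_card (Finset.filter_subset _ _)
      have h2 : (1 : ℝ) ≤ (p : ℝ) ^ ((ℓ : ℝ) + (q : ℝ) - τ / 2) := by
        rw [show (1 : ℝ) = (p : ℝ) ^ (0 : ℝ) by rw [Real.rpow_zero]]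
        exact Real.rpow_le_rpow_of_exponent_le hp1.le (by linarith)
      calc ((((qAtom F a).filter fun x => N *ᵥ x = 0).card : ℝ)) / ((qAtom F a).card : ℝ)
          ≤ 1 := hle1
        _ ≤ 3 * (p : ℝ) ^ ((ℓ : ℝ) + (q : ℝ) - τ / 2) := by linarith
    · push_neg at hcase
      have hτ0 : (0 : ℝ) ≤ τ := by
        have : (0 : ℝ) ≤ (ℓ : ℝ) + (q : ℝ) := by positivity
        linarith
      set ρ : ℝ := (p : ℝ) ^ ((n : ℝ) - ((ℓ : ℝ) + (q : ℝ)) - 1 / 2) with hρdef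
      have hρ0 : 0 ≤ ρ := (Real.rpow_pos_of_pos hp0 _).le
      have hgauss : ∀ lam' : Fin q → ZMod p, lam' ≠ 0 → ∀ c : Fin n → ZMod p,
          ‖∑ x : Fin n → ZMod p,
              TWA.e ζ (x ⬝ᵥ ((∑ j, lam' j • F.M j) *ᵥ x) + c ⬝ᵥ x)‖ ≤ ρ := by
        intro lam' hlam' c
        set N' : Matrix (Fin n) (Fin n) (ZMod p) := ∑ j, lam' j • F.M j with hN'
        have hsymm : N'.IsSymm := by
          rw [hN']
          unfold Matrix.IsSymm
          rw [Matrix.transpose_sum]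
          exact Finset.sum_congr rfl fun j _ => (F.symm j).smul (lam' j)
        have hr' : N'.rank ≤ n := (TWA.card_ker N').2
        have hτr' : τ ≤ (N'.rank : ℝ) := hτ lam' hlam'
        have hrnat : 2 * (ℓ + q) < N'.rank := by
          have : (2 * ((ℓ : ℝ) + (q : ℝ))) < (N'.rank : ℝ) := lt_of_lt_of_le hcase hτr'
          exact_mod_cast (by push_cast; linarith : ((2 * (ℓ + q) : ℕ) : ℝ) < (N'.rank : ℝ))
        have hsq := TWA.gauss_norm_sq hζ hp2 N' hsymm c
        have hρsq : (p : ℝ) ^ n * (p : ℝ) ^ (n - N'.rank) ≤ ρ ^ 2 := by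
          have hcast : (p : ℝ) ^ n * (p : ℝ) ^ (n - N'.rank)
              = (p : ℝ) ^ ((n : ℝ) + ((n : ℝ) - (N'.rank : ℝ))) := by
            rw [← Real.rpow_natCast (p : ℝ) n, ← Real.rpow_natCast (p : ℝ) (n - N'.rank),
              ← Real.rpow_add hp0]
            congr 1
            rw [Nat.cast_sub hr']
          have hρ2 : ρ ^ 2 = (p : ℝ) ^ (((n : ℝ) - ((ℓ : ℝ) + (q : ℝ)) - 1 / 2) * 2) := by
            rw [hρdef, Real.rpow_mul hp0.le, Real.rpow_two]
          rw [hcast, hρ2]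
          refine Real.rpow_le_rpow_of_exponent_le hp1.le ?_
          have : ((2 * (ℓ + q) + 1 : ℕ) : ℝ) ≤ (N'.rank : ℝ) := by exact_mod_cast hrnat
          push_cast at this
          linarith
        have h8 : ‖∑ x : Fin n → ZMod p,
            TWA.e ζ (x ⬝ᵥ (N' *ᵥ x) + c ⬝ᵥ x)‖ ^ 2 ≤ ρ ^ 2 := hsq.trans hρsq
        have := Real.sqrt_le_sqrt h8
        rwa [Real.sqrt_sq (norm_nonneg _), Real.sqrt_sq hρ0] at this
      have hlower := TWA.atom_card_lower hζ F a ρ hρ0 hgauss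
      have hkey1 : (p : ℝ) ^ (ℓ + q) * ρ ≤ (3 / 5) * (p : ℝ) ^ (n : ℝ) := by
        have e1 : (p : ℝ) ^ (ℓ + q) * ρ = (p : ℝ) ^ ((n : ℝ) - 1 / 2) := by
          rw [hρdef, ← Real.rpow_natCast (p : ℝ) (ℓ + q), ← Real.rpow_add hp0]
          congr 1
          push_cast
          ring
        have e2 : (p : ℝ) ^ ((n : ℝ) - 1 / 2)
            = (p : ℝ) ^ (n : ℝ) * (p : ℝ) ^ (-(1 / 2) : ℝ) := by
          rw [← Real.rpow_add hp0, sub_eq_add_neg]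
        have e3 : (p : ℝ) ^ (-(1 / 2) : ℝ) ≤ 3 / 5 := by
          have h35 : (5 / 3 : ℝ) ≤ (p : ℝ) ^ ((1 / 2) : ℝ) := by
            have hs3 : (5 / 3 : ℝ) ≤ Real.sqrt 3 :=
              (Real.le_sqrt (by norm_num) (by norm_num)).2 (by norm_num)
            have hs3p : Real.sqrt 3 ≤ Real.sqrt p := Real.sqrt_le_sqrt hp3
            have : Real.sqrt p = (p : ℝ) ^ ((1 / 2) : ℝ) := Real.sqrt_eq_rpow _
            linarith
          have hpos : (0 : ℝ) < (p : ℝ) ^ ((1 / 2) : ℝ) := Real.rpow_pos_of_pos hp0 _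
          rw [Real.rpow_neg hp0.le, inv_le_comm₀ hpos (by norm_num)]
          norm_num
          linarith
        calc (p : ℝ) ^ (ℓ + q) * ρ = (p : ℝ) ^ (n : ℝ) * (p : ℝ) ^ (-(1 / 2) : ℝ) := by
              rw [e1, e2]
          _ ≤ (p : ℝ) ^ (n : ℝ) * (3 / 5) := by
              exact mul_le_mul_of_nonneg_left e3 (Real.rpow_pos_of_pos hp0 _).le
          _ = (3 / 5) * (p : ℝ) ^ (n : ℝ) := by ring
      have hpn : (p : ℝ) ^ n = (p : ℝ) ^ (n : ℝ) := (Real.rpow_natCast _ _).symm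
      have hD2 : (2 / 5) * (p : ℝ) ^ (n : ℝ) ≤ (p : ℝ) ^ (ℓ + q) * ((qAtom F a).card : ℝ) := by
        rw [← hpn]
        rw [← hpn] at hkey1
        linarith
      have hDlow : (2 / 5) * (p : ℝ) ^ ((n : ℝ) - ((ℓ : ℝ) + (q : ℝ)))
          ≤ ((qAtom F a).card : ℝ) := by
        have hLpos : (0 : ℝ) < (p : ℝ) ^ (ℓ + q) := pow_pos hp0 _
        rw [show (p : ℝ) ^ ((n : ℝ) - ((ℓ : ℝ) + (q : ℝ)))
            = (p : ℝ) ^ (n : ℝ) / (p : ℝ) ^ (ℓ + q) by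
          rw [← Real.rpow_natCast (p : ℝ) (ℓ + q), ← Real.rpow_sub hp0]
          congr 1
          push_cast
          ring]
        rw [← mul_div_assoc, div_le_iff₀ hLpos]
        calc (2 / 5) * (p : ℝ) ^ (n : ℝ) ≤ (p : ℝ) ^ (ℓ + q) * ((qAtom F a).card : ℝ) := hD2
          _ = ((qAtom F a).card : ℝ) * (p : ℝ) ^ (ℓ + q) := by ring
      have hnum : ((((qAtom F a).filter fun x => N *ᵥ x = 0).card : ℝ))
          ≤ (p : ℝ) ^ ((n : ℝ) - τ) := by
        have hsub : ((qAtom F a).filter fun x => N *ᵥ x = 0)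
            ⊆ (Finset.univ.filter fun x : Fin n → ZMod p => N *ᵥ x = 0) := by
          intro x hx
          rw [Finset.mem_filter] at hx ⊢
          exact ⟨Finset.mem_univ _, hx.2⟩
        have hle := Finset.card_le_card hsub
        calc ((((qAtom F a).filter fun x => N *ᵥ x = 0).card : ℝ))
            ≤ (((Finset.univ.filter fun x : Fin n → ZMod p => N *ᵥ x = 0).card : ℝ)) := by
              exact_mod_cast hle
          _ = (p : ℝ) ^ (n - N.rank) := (TWA.card_ker N).1
          _ = (p : ℝ) ^ ((n : ℝ) - (N.rank : ℝ)) := by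
              rw [← Real.rpow_natCast (p : ℝ) (n - N.rank)]
              congr 1
              rw [Nat.cast_sub hrle]
          _ ≤ (p : ℝ) ^ ((n : ℝ) - τ) :=
              Real.rpow_le_rpow_of_exponent_le hp1.le (by linarith)
      rw [div_le_iff₀ hD0]
      have s1 : (p : ℝ) ^ ((n : ℝ) - τ) ≤ (6 / 5) * (p : ℝ) ^ ((n : ℝ) - τ / 2) := by
        have hmono := Real.rpow_le_rpow_of_exponent_le hp1.le
          (show (n : ℝ) - τ ≤ (n : ℝ) - τ / 2 by linarith)
        nlinarith [Real.rpow_pos_of_pos hp0 ((n : ℝ) - τ / 2)]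
      have s2 : (6 / 5) * (p : ℝ) ^ ((n : ℝ) - τ / 2)
          = 3 * (p : ℝ) ^ ((ℓ : ℝ) + (q : ℝ) - τ / 2)
            * ((2 / 5) * (p : ℝ) ^ ((n : ℝ) - ((ℓ : ℝ) + (q : ℝ)))) := by
        rw [show 3 * (p : ℝ) ^ ((ℓ : ℝ) + (q : ℝ) - τ / 2)
            * ((2 / 5) * (p : ℝ) ^ ((n : ℝ) - ((ℓ : ℝ) + (q : ℝ))))
            = (6 / 5) * ((p : ℝ) ^ ((ℓ : ℝ) + (q : ℝ) - τ / 2)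
                * (p : ℝ) ^ ((n : ℝ) - ((ℓ : ℝ) + (q : ℝ)))) by ring,
          ← Real.rpow_add hp0]
        congr 2
        ring
      have s3 : 3 * (p : ℝ) ^ ((ℓ : ℝ) + (q : ℝ) - τ / 2)
            * ((2 / 5) * (p : ℝ) ^ ((n : ℝ) - ((ℓ : ℝ) + (q : ℝ))))
          ≤ 3 * (p : ℝ) ^ ((ℓ : ℝ) + (q : ℝ) - τ / 2) * ((qAtom F a).card : ℝ) :=
        mul_le_mul_of_nonneg_left hDlow (by positivity)
      calc ((((qAtom F a).filter fun x => N *ᵥ x = 0).card : ℝ))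
          ≤ (p : ℝ) ^ ((n : ℝ) - τ) := hnum
        _ ≤ (6 / 5) * (p : ℝ) ^ ((n : ℝ) - τ / 2) := s1
        _ = 3 * (p : ℝ) ^ ((ℓ : ℝ) + (q : ℝ) - τ / 2)
            * ((2 / 5) * (p : ℝ) ^ ((n : ℝ) - ((ℓ : ℝ) + (q : ℝ)))) := s2
        _ ≤ 3 * (p : ℝ) ^ ((ℓ : ℝ) + (q : ℝ) - τ / 2) * ((qAtom F a).card : ℝ) := s3

  · -- part (iii)
    intro b
    classical
    set g : ((Fin n → ZMod p) × (Fin n → ZMod p)) → Fin q → ZMod p :=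
      fun xy j => xy.1 ⬝ᵥ (F.M j *ᵥ xy.2) - b j with hg
    have hcount := TWA.count_expand (ζ := ζ) hζ g
    have hset : (Finset.univ.filter fun xy : (Fin n → ZMod p) × (Fin n → ZMod p) =>
        ∀ j, g xy j = 0) = bilinSet F.M b := by
      ext xy
      simp [hg, bilinSet, sub_eq_zero]
    rw [hset, Fintype.card_fin] at hcount
    set T : (Fin q → ZMod p) → ℂ :=
      fun s => ∑ xy : (Fin n → ZMod p) × (Fin n → ZMod p), TWA.e ζ (∑ j, s j * g xy j) with hT
    have h1 := hζ.pow_eq_one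
    have hfac : ∀ s : Fin q → ZMod p, T s = TWA.e ζ (-∑ j, s j * b j)
        * ∑ x : Fin n → ZMod p, ∑ y : Fin n → ZMod p,
            TWA.e ζ (x ⬝ᵥ ((∑ j, s j • F.M j) *ᵥ y) + 0 ⬝ᵥ x + 0 ⬝ᵥ y) := by
      intro s
      rw [hT]
      beta_reduce
      rw [Fintype.sum_prod_type]
      rw [Finset.mul_sum]
      refine Finset.sum_congr rfl fun x _ => ?_
      rw [Finset.mul_sum]
      refine Finset.sum_congr rfl fun y _ => ?_
      rw [← TWA.e_add h1]
      congr 1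
      rw [TWA.dot_mulVec_sum]
      simp only [hg, zero_dotProduct, add_zero, mul_sub]
      rw [Finset.sum_sub_distrib]
      ring
    have hT0 : T 0 = (p : ℂ) ^ (2 * n) := by
      rw [hT]
      simp only [Pi.zero_apply, zero_mul, Finset.sum_const_zero, TWA.e_zero]
      rw [Finset.sum_const, Finset.card_univ, nsmul_eq_mul, mul_one, Fintype.card_prod]
      rw [Fintype.card_fun, ZMod.card, Fintype.card_fin]
      push_cast
      ring
    have hTs : ∀ s : Fin q → ZMod p, s ≠ 0 →
        ‖T s‖ ≤ (p : ℝ) ^ (2 * n) * (p : ℝ) ^ (-τ) := by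
      intro s hs
      rw [hfac, norm_mul, TWA.e_norm h1, one_mul]
      refine (TWA.bilin_sum_norm_le hζ (∑ j, s j • F.M j) 0 0).trans ?_
      set r := (∑ j, s j • F.M j).rank with hr
      have hrle : r ≤ n := (TWA.card_ker (∑ j, s j • F.M j)).2
      have hτr : τ ≤ (r : ℝ) := hτ s hs
      calc (p : ℝ) ^ n * (p : ℝ) ^ (n - r)
          = (p : ℝ) ^ ((2 * n : ℝ) + -(r : ℝ)) := by
            rw [← Real.rpow_natCast (p : ℝ) n, ← Real.rpow_natCast (p : ℝ) (n - r),
              ← Real.rpow_add hp0]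
            congr 1
            rw [Nat.cast_sub hrle]
            ring
        _ ≤ (p : ℝ) ^ ((2 * n : ℝ) + -τ) :=
            Real.rpow_le_rpow_of_exponent_le hp1.le (by linarith)
        _ = (p : ℝ) ^ (2 * n) * (p : ℝ) ^ (-τ) := by
            rw [Real.rpow_add hp0]
            congr 1
            rw [show ((2 : ℝ) * (n : ℝ)) = (((2 * n : ℕ) : ℝ)) by push_cast; ring,
              Real.rpow_natCast]
    have hsplit : ∑ s : Fin q → ZMod p, T s
        = T 0 + ∑ s ∈ Finset.univ.erase 0, T s :=
      (Finset.add_sum_erase _ T (Finset.mem_univ 0)).symm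
    have hEnorm : ‖∑ s ∈ Finset.univ.erase (0 : Fin q → ZMod p), T s‖
        ≤ (p : ℝ) ^ q * ((p : ℝ) ^ (2 * n) * (p : ℝ) ^ (-τ)) := by
      refine (norm_sum_le _ _).trans ?_
      have hstep : ∑ s ∈ Finset.univ.erase (0 : Fin q → ZMod p), ‖T s‖
          ≤ ∑ _s ∈ Finset.univ.erase (0 : Fin q → ZMod p),
              ((p : ℝ) ^ (2 * n) * (p : ℝ) ^ (-τ)) :=
        Finset.sum_le_sum fun s hsmem => hTs s (Finset.ne_of_mem_erase hsmem)
      refine hstep.trans ?_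
      rw [Finset.sum_const, nsmul_eq_mul]
      have hc : ((Finset.univ.erase (0 : Fin q → ZMod p)).card : ℝ) ≤ (p : ℝ) ^ q := by
        have h4 : (Finset.univ.erase (0 : Fin q → ZMod p)).card ≤ p ^ q := by
          rw [← hcardfun q]
          exact Finset.card_le_card (Finset.erase_subset _ _)
        calc ((Finset.univ.erase (0 : Fin q → ZMod p)).card : ℝ) ≤ ((p ^ q : ℕ) : ℝ) := by
              exact_mod_cast h4
          _ = (p : ℝ) ^ q := by push_cast; ring
      exact mul_le_mul_of_nonneg_right hc (by positivity)
    have hC : ((bilinSet F.M b).card : ℂ) * (p : ℂ) ^ q - (p : ℂ) ^ (2 * n)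
        = ∑ s ∈ Finset.univ.erase (0 : Fin q → ZMod p), T s := by
      rw [mul_comm, hcount, hsplit, hT0]
      ring
    have hRC : ((((bilinSet F.M b).card : ℝ) * (p : ℝ) ^ q - (p : ℝ) ^ (2 * n) : ℝ) : ℂ)
        = ((bilinSet F.M b).card : ℂ) * (p : ℂ) ^ q - (p : ℂ) ^ (2 * n) := by
      push_cast
      ring
    have habs : |((bilinSet F.M b).card : ℝ) * (p : ℝ) ^ q - (p : ℝ) ^ (2 * n)|
        ≤ (p : ℝ) ^ q * ((p : ℝ) ^ (2 * n) * (p : ℝ) ^ (-τ)) := by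
      have h7 := congrArg norm (hRC.trans hC)
      rw [Complex.norm_real, Real.norm_eq_abs] at h7
      rw [h7]
      exact hEnorm
    have hrw : ((bilinSet F.M b).card : ℝ) / (p : ℝ) ^ (2 * n) - ((p : ℝ) ^ q)⁻¹
        = (((bilinSet F.M b).card : ℝ) * (p : ℝ) ^ q - (p : ℝ) ^ (2 * n))
            / ((p : ℝ) ^ (2 * n) * (p : ℝ) ^ q) := by
      field_simp
    rw [hrw, abs_div,
      abs_of_pos (show (0 : ℝ) < (p : ℝ) ^ (2 * n) * (p : ℝ) ^ q by positivity),
      div_le_iff₀ (by positivity)]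
    calc |((bilinSet F.M b).card : ℝ) * (p : ℝ) ^ q - (p : ℝ) ^ (2 * n)|
        ≤ (p : ℝ) ^ q * ((p : ℝ) ^ (2 * n) * (p : ℝ) ^ (-τ)) := habs
      _ = (p : ℝ) ^ (-τ) * ((p : ℝ) ^ (2 * n) * (p : ℝ) ^ q) := by ring
      _ ≤ 3 * (p : ℝ) ^ (-τ) * ((p : ℝ) ^ (2 * n) * (p : ℝ) ^ q) := by
          nlinarith [mul_pos (Real.rpow_pos_of_pos hp0 (-τ))
            (mul_pos (pow_pos hp0 (2 * n)) (pow_pos hp0 q))]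

end TW
end
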